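/- arXiv:2603.03405 — 8 statements merged into one kernel-verified Lean document; each statement's English description precedes it below -/
import Mathlib

section
/- Assume P ≪ Q, Q ≪ P, and ∫ p(x) e^{ε|Δ(x)|} dμ(x) < ∞ for some ε > 0. Then SRFE_τ(P‖Q) converges to the forward KL divergence KL(P‖Q) as τ → 1 from the left within (0,1). -/
open MeasureTheory Real Filter Topology

/-- Assuming mutual absolute continuity (expressed at the level of densities)
and the exponential moment condition `∫ p e^{ε|Δ|} dμ < ∞` for some `ε > 0`, the
Surprisal–Rényi Free Energy `SRFE_τ(P‖Q) = -log F(τ)/(τ(1-τ))` converges to the forward KL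
divergence `KL(P‖Q) = ∫ p log(p/q) dμ` as `τ → 1⁻` within `(0,1)`. -/
theorem srfe_tendsto_forwardKL
    {X : Type*} [MeasurableSpace X] (μ : Measure X) [SigmaFinite μ]
    (p q : X → ℝ) (hpm : Measurable p) (hqm : Measurable q)
    (hp0 : ∀ x, 0 ≤ p x) (hq0 : ∀ x, 0 ≤ q x)
    (hpi : Integrable p μ) (hqi : Integrable q μ)
    (hp1 : ∫ x, p x ∂μ = 1) (hq1 : ∫ x, q x ∂μ = 1)
    (hPQ : ∀ᵐ x ∂μ, q x = 0 → p x = 0)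
    (hQP : ∀ᵐ x ∂μ, p x = 0 → q x = 0)
    (hexp : ∃ ε > (0 : ℝ),
      Integrable (fun x => p x * Real.exp (ε * |Real.log (p x / q x)|)) μ) :
    Tendsto (fun τ : ℝ => -Real.log (∫ x, p x ^ τ * q x ^ (1 - τ) ∂μ) / (τ * (1 - τ)))
      (𝓝[Set.Ioo (0 : ℝ) 1] 1)
      (𝓝 (∫ x, p x * Real.log (p x / q x) ∂μ)) := by
  obtain ⟨ε, hε, hint⟩ := hexp
  set Δ : X → ℝ := fun x => Real.log (p x / q x) with hΔdef
  have hΔm : Measurable Δ := Real.measurable_log.comp (hpm.div hqm)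
  set g : ℝ → ℝ := fun s => ∫ x, p x * Real.exp (-s * Δ x) ∂μ with hgdef
  set KL : ℝ := ∫ x, p x * Δ x ∂μ with hKL
  -- derivative of g at 0
  have key : HasDerivAt g (-KL) 0 := by
    have hball : (0:ℝ) < ε/2 := by linarith
    have hmeas : ∀ᶠ s in 𝓝 (0:ℝ),
        AEStronglyMeasurable (fun x => p x * Real.exp (-s * Δ x)) μ :=
      Eventually.of_forall fun s =>
        (hpm.mul ((hΔm.const_mul (-s)).exp)).aestronglyMeasurable
    have hF_int : Integrable (fun x => p x * Real.exp (-(0:ℝ) * Δ x)) μ := by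
      simpa using hpi
    have hF'_meas : AEStronglyMeasurable
        (fun x => -(p x * Δ x * Real.exp (-(0:ℝ) * Δ x))) μ :=
      (((hpm.mul hΔm).mul ((hΔm.const_mul (-(0:ℝ))).exp)).neg).aestronglyMeasurable
    have h_bound : ∀ᵐ x ∂μ, ∀ s ∈ Metric.ball (0:ℝ) (ε/2),
        ‖-(p x * Δ x * Real.exp (-s * Δ x))‖ ≤
          p x * (|Δ x| * Real.exp (ε/2 * |Δ x|)) := by
      refine Eventually.of_forall fun x => fun s hs => ?_
      have hs' : |s| < ε/2 := by simpa [Real.dist_eq] using hs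
      have h1 : -s * Δ x ≤ ε/2 * |Δ x| := by
        calc -s * Δ x ≤ |(-s) * Δ x| := le_abs_self _
          _ = |s| * |Δ x| := by rw [abs_mul, abs_neg]
          _ ≤ ε/2 * |Δ x| := by
              exact mul_le_mul_of_nonneg_right hs'.le (abs_nonneg _)
      have : ‖-(p x * Δ x * Real.exp (-s * Δ x))‖
          = p x * |Δ x| * Real.exp (-s * Δ x) := by
        rw [norm_neg, norm_mul, norm_mul, Real.norm_eq_abs, Real.norm_eq_abs,
          Real.norm_eq_abs, abs_of_nonneg (hp0 x), abs_of_nonneg (Real.exp_pos _).le]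
      rw [this, mul_assoc]
      exact mul_le_mul_of_nonneg_left
        (mul_le_mul_of_nonneg_left (Real.exp_le_exp.2 h1) (abs_nonneg _)) (hp0 x)
    have hbound_int : Integrable (fun x => p x * (|Δ x| * Real.exp (ε/2 * |Δ x|))) μ := by
      have hb : ∀ x, ‖p x * (|Δ x| * Real.exp (ε/2 * |Δ x|))‖ ≤
          (2/ε) * (p x * Real.exp (ε * |Δ x|)) := by
        intro x
        have h2 : |Δ x| ≤ (2/ε) * Real.exp (ε/2 * |Δ x|) := by
          have := Real.add_one_le_exp (ε/2 * |Δ x|)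
          have h3 : ε/2 * |Δ x| ≤ Real.exp (ε/2 * |Δ x|) := by linarith
          calc |Δ x| = (2/ε) * (ε/2 * |Δ x|) := by field_simp
            _ ≤ (2/ε) * Real.exp (ε/2 * |Δ x|) := by
                exact mul_le_mul_of_nonneg_left h3 (by positivity)
        have hexp2 : Real.exp (ε/2 * |Δ x|) * Real.exp (ε/2 * |Δ x|)
            = Real.exp (ε * |Δ x|) := by
          rw [← Real.exp_add]; ring_nf
        have : |Δ x| * Real.exp (ε/2 * |Δ x|) ≤ (2/ε) * Real.exp (ε * |Δ x|) := by
          calc |Δ x| * Real.exp (ε/2 * |Δ x|)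
              ≤ (2/ε) * Real.exp (ε/2 * |Δ x|) * Real.exp (ε/2 * |Δ x|) :=
                mul_le_mul_of_nonneg_right h2 (Real.exp_pos _).le
            _ = (2/ε) * Real.exp (ε * |Δ x|) := by rw [mul_assoc, hexp2]
        have hnorm : ‖p x * (|Δ x| * Real.exp (ε/2 * |Δ x|))‖
            = p x * (|Δ x| * Real.exp (ε/2 * |Δ x|)) := by
          rw [Real.norm_eq_abs, abs_of_nonneg (mul_nonneg (hp0 x) (by positivity))]
        rw [hnorm]
        calc p x * (|Δ x| * Real.exp (ε/2 * |Δ x|))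
            ≤ p x * ((2/ε) * Real.exp (ε * |Δ x|)) :=
              mul_le_mul_of_nonneg_left this (hp0 x)
          _ = (2/ε) * (p x * Real.exp (ε * |Δ x|)) := by ring
      refine Integrable.mono' (hint.const_mul (2/ε)) ?_ (Eventually.of_forall hb)
      exact (hpm.mul (hΔm.abs.mul ((hΔm.abs.const_mul (ε/2)).exp))).aestronglyMeasurable
    have h_diff : ∀ᵐ x ∂μ, ∀ s ∈ Metric.ball (0:ℝ) (ε/2),
        HasDerivAt (fun s => p x * Real.exp (-s * Δ x))
          (-(p x * Δ x * Real.exp (-s * Δ x))) s := by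
      refine Eventually.of_forall fun x => fun s _ => ?_
      have h1 : HasDerivAt (fun s : ℝ => -s * Δ x) (-Δ x) s := by
        simpa using ((hasDerivAt_id s).neg.mul_const (Δ x))
      have h2 := (h1.exp).const_mul (p x)
      exact h2.congr_deriv (by ring)
    have := hasDerivAt_integral_of_dominated_loc_of_deriv_le (Metric.ball_mem_nhds 0 hball) hmeas hF_int
      hF'_meas h_bound hbound_int h_diff
    have h2 := this.2
    have heq : (∫ x, -(p x * Δ x * Real.exp (-(0:ℝ) * Δ x)) ∂μ) = -KL := by
      rw [hKL, ← integral_neg]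
      congr 1 with x
      simp
    rwa [heq] at h2
  have hg0 : g 0 = 1 := by
    rw [hgdef]
    simpa using hp1
  -- log g has derivative -KL at 0
  have hlog : HasDerivAt (fun s => Real.log (g s)) (-KL) 0 := by
    have := key.log (by rw [hg0]; norm_num)
    simpa [hg0] using this
  have hslope : Tendsto (fun s => Real.log (g s) / s) (𝓝[≠] (0:ℝ)) (𝓝 (-KL)) := by
    have h := hasDerivAt_iff_tendsto_slope.1 hlog
    refine h.congr fun s => ?_
    simp [slope_def_field, hg0, div_eq_inv_mul]
  -- map τ ↦ 1 - τ
  have hmap : Tendsto (fun τ : ℝ => 1 - τ) (𝓝[Set.Ioo (0:ℝ) 1] 1) (𝓝[≠] (0:ℝ)) := by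
    apply tendsto_nhdsWithin_of_tendsto_nhds_of_eventually_within
    · have : Tendsto (fun τ : ℝ => 1 - τ) (𝓝 (1:ℝ)) (𝓝 (1 - 1)) :=
        (continuous_const.sub continuous_id).tendsto 1
      simpa using this.mono_left nhdsWithin_le_nhds
    · filter_upwards [self_mem_nhdsWithin] with τ hτ
      have : (1:ℝ) - τ ≠ 0 := sub_ne_zero.2 (ne_of_gt hτ.2)
      simpa [Set.mem_compl_singleton_iff] using this
  have hcomp : Tendsto (fun τ : ℝ => Real.log (g (1 - τ)) / (1 - τ))
      (𝓝[Set.Ioo (0:ℝ) 1] 1) (𝓝 (-KL)) := hslope.comp hmap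
  have hinv : Tendsto (fun τ : ℝ => τ⁻¹) (𝓝[Set.Ioo (0:ℝ) 1] 1) (𝓝 1) := by
    have : Tendsto (fun τ : ℝ => τ⁻¹) (𝓝 (1:ℝ)) (𝓝 (1:ℝ)⁻¹) :=
      tendsto_inv₀ (by norm_num)
    simpa using this.mono_left nhdsWithin_le_nhds
  have hmain : Tendsto (fun τ : ℝ => -(Real.log (g (1 - τ)) / (1 - τ)) * τ⁻¹)
      (𝓝[Set.Ioo (0:ℝ) 1] 1) (𝓝 KL) := by
    have := (hcomp.neg).mul hinv
    simpa using this
  have heq : (fun τ : ℝ => -(Real.log (g (1 - τ)) / (1 - τ)) * τ⁻¹)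
      =ᶠ[𝓝[Set.Ioo (0:ℝ) 1] 1]
      (fun τ : ℝ => -Real.log (∫ x, p x ^ τ * q x ^ (1 - τ) ∂μ) / (τ * (1 - τ))) := by
    filter_upwards [self_mem_nhdsWithin] with τ hτ
    have hτ0 : (0:ℝ) < τ := hτ.1
    have hτ1 : τ < 1 := hτ.2
    have hs0 : (0:ℝ) < 1 - τ := by linarith
    have hFg : (∫ x, p x ^ τ * q x ^ (1 - τ) ∂μ) = g (1 - τ) := by
      rw [hgdef]
      refine integral_congr_ae ?_
      filter_upwards [hPQ] with x hx
      by_cases hp : p x = 0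
      · rw [hp, Real.zero_rpow (ne_of_gt hτ0)]
        simp
      · have hppos : 0 < p x := lt_of_le_of_ne (hp0 x) (Ne.symm hp)
        have hq : q x ≠ 0 := fun h => hp (hx h)
        have hqpos : 0 < q x := lt_of_le_of_ne (hq0 x) (Ne.symm hq)
        rw [Real.rpow_def_of_pos hppos, Real.rpow_def_of_pos hqpos, ← Real.exp_add]
        have hΔx : Δ x = Real.log (p x) - Real.log (q x) := by
          rw [hΔdef]; exact Real.log_div hp hq
        rw [hΔx]
        nth_rewrite 2 [← Real.exp_log hppos]
        rw [← Real.exp_add]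
        congr 1
        ring
    rw [hFg]
    have hτne : τ ≠ 0 := ne_of_gt hτ0
    have hsne : (1:ℝ) - τ ≠ 0 := ne_of_gt hs0
    rw [neg_mul, neg_div, neg_inj, ← div_eq_mul_inv, div_div, mul_comm]
  exact Tendsto.congr' heq hmain
end

section
/- Assume P ≪ Q, Q ≪ P, and ∫ q(x) e^{ε|Δ(x)|} dμ(x) < ∞ for some ε > 0. Then SRFE_τ(P‖Q) converges to the reverse KL divergence KL(Q‖P) as τ → 0 from the right within (0,1). -/
open MeasureTheory Real Filter Topology

/-- Assuming mutual absolute continuity (expressed at the level of densities)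
and the exponential moment condition `∫ q e^{ε|Δ|} dμ < ∞` for some `ε > 0`, the
Surprisal–Rényi Free Energy `SRFE_τ(P‖Q) = -log F(τ)/(τ(1-τ))` converges to the reverse KL
divergence `KL(Q‖P) = ∫ q log(q/p) dμ` as `τ → 0⁺` within `(0,1)`. -/
theorem srfe_tendsto_reverseKL
    {X : Type*} [MeasurableSpace X] (μ : Measure X) [SigmaFinite μ]
    (p q : X → ℝ) (hpm : Measurable p) (hqm : Measurable q)
    (hp0 : ∀ x, 0 ≤ p x) (hq0 : ∀ x, 0 ≤ q x)
    (hpi : Integrable p μ) (hqi : Integrable q μ)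
    (hp1 : ∫ x, p x ∂μ = 1) (hq1 : ∫ x, q x ∂μ = 1)
    (hPQ : ∀ᵐ x ∂μ, q x = 0 → p x = 0)
    (hQP : ∀ᵐ x ∂μ, p x = 0 → q x = 0)
    (hexp : ∃ ε > (0 : ℝ),
      Integrable (fun x => q x * Real.exp (ε * |Real.log (p x / q x)|)) μ) :
    Tendsto (fun τ : ℝ => -Real.log (∫ x, p x ^ τ * q x ^ (1 - τ) ∂μ) / (τ * (1 - τ)))
      (𝓝[Set.Ioo (0 : ℝ) 1] 0)
      (𝓝 (∫ x, q x * Real.log (q x / p x) ∂μ)) := by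
  obtain ⟨ε, hε, hexpint⟩ := hexp
  set Δ : X → ℝ := fun x => Real.log (p x / q x) with hΔdef
  have hΔm : Measurable Δ := (hpm.div hqm).log
  set G : ℝ → ℝ := fun τ => ∫ x, q x * Real.exp (τ * Δ x) ∂μ with hGdef
  -- the dominating bound for the derivative
  set bound : X → ℝ := fun x => q x * (|Δ x| * Real.exp ((ε / 2) * |Δ x|)) with hbdef
  have hb_le : ∀ x, bound x ≤ (2 / ε) * (q x * Real.exp (ε * |Real.log (p x / q x)|)) := by
    intro x
    have h1 : |Δ x| ≤ (2 / ε) * Real.exp ((ε / 2) * |Δ x|) := by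
      have hs : (ε / 2) * |Δ x| ≤ Real.exp ((ε / 2) * |Δ x|) := by
        have := Real.add_one_le_exp ((ε / 2) * |Δ x|)
        linarith
      have := mul_le_mul_of_nonneg_left hs (by positivity : (0:ℝ) ≤ 2 / ε)
      calc |Δ x| = (2 / ε) * ((ε / 2) * |Δ x|) := by field_simp
        _ ≤ (2 / ε) * Real.exp ((ε / 2) * |Δ x|) := this
    have h2 : Real.exp ((ε / 2) * |Δ x|) * Real.exp ((ε / 2) * |Δ x|)
        = Real.exp (ε * |Δ x|) := by
      rw [← Real.exp_add]; ring_nf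
    have hq := hq0 x
    calc bound x ≤ q x * ((2 / ε) * Real.exp ((ε / 2) * |Δ x|) * Real.exp ((ε / 2) * |Δ x|)) := by
          apply mul_le_mul_of_nonneg_left _ hq
          exact mul_le_mul_of_nonneg_right h1 (Real.exp_pos _).le
      _ = (2 / ε) * (q x * Real.exp (ε * |Δ x|)) := by rw [mul_assoc, h2]; ring
  have hbound_int : Integrable bound μ := by
    refine Integrable.mono' (hexpint.const_mul (2 / ε)) ?_ ?_
    · exact (hqm.mul (hΔm.abs.mul ((measurable_const.mul hΔm.abs).exp))).aestronglyMeasurable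
    · filter_upwards with x
      rw [Real.norm_eq_abs, abs_of_nonneg
        (mul_nonneg (hq0 x) (mul_nonneg (abs_nonneg _) (Real.exp_pos _).le))]
      exact hb_le x
  -- derivative of G at 0
  have key : Integrable (fun x => q x * Δ x) μ ∧
      HasDerivAt G (∫ x, q x * Δ x ∂μ) 0 := by
    apply hasDerivAt_integral_of_dominated_loc_of_lip (F := fun τ x => q x * Real.exp (τ * Δ x))
      (bound := bound) (Metric.ball_mem_nhds (0:ℝ) (half_pos hε))
    · filter_upwards with τ
      exact (hqm.mul ((measurable_const.mul hΔm).exp)).aestronglyMeasurable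
    · simpa using hqi.congr (by filter_upwards with x; simp)
    · exact (hqm.mul hΔm).aestronglyMeasurable
    · filter_upwards with x
      have hderiv : ∀ τ ∈ Metric.ball (0:ℝ) (ε/2),
          HasDerivWithinAt (fun τ => q x * Real.exp (τ * Δ x))
            (q x * (Δ x * Real.exp (τ * Δ x))) (Metric.ball (0:ℝ) (ε/2)) τ := by
        intro τ _
        have h := ((hasDerivAt_id τ).mul_const (Δ x)).exp.const_mul (q x)
        simpa [mul_comm, mul_assoc, mul_left_comm] using h.hasDerivWithinAt
      have hle : ∀ τ ∈ Metric.ball (0:ℝ) (ε/2),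
          ‖q x * (Δ x * Real.exp (τ * Δ x))‖ ≤ bound x := by
        intro τ hτ
        rw [Real.norm_eq_abs, abs_mul, abs_mul, abs_of_nonneg (hq0 x),
          abs_of_pos (Real.exp_pos _)]
        refine mul_le_mul_of_nonneg_left (mul_le_mul_of_nonneg_left ?_ (abs_nonneg _)) (hq0 x)
        apply Real.exp_le_exp.mpr
        calc τ * Δ x ≤ |τ * Δ x| := le_abs_self _
          _ = |τ| * |Δ x| := abs_mul _ _
          _ ≤ (ε / 2) * |Δ x| := by
            apply mul_le_mul_of_nonneg_right _ (abs_nonneg _)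
            simpa [Real.dist_eq] using (Metric.mem_ball.mp hτ).le
      exact (convex_ball (0:ℝ) (ε/2)).lipschitzOnWith_of_nnnorm_hasDerivWithin_le
        (fun τ hτ => hderiv τ hτ) (fun τ hτ => by
          rw [← NNReal.coe_le_coe]
          simpa [Real.coe_nnabs] using (hle τ hτ).trans (le_abs_self _))
    · exact hbound_int
    · filter_upwards with x
      have h := ((hasDerivAt_id (0:ℝ)).mul_const (Δ x)).exp.const_mul (q x)
      simpa using h
  have hG0 : G 0 = 1 := by
    have h : G 0 = ∫ x, q x ∂μ := by
      apply integral_congr_ae; filter_upwards with x; simp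
    rw [h, hq1]
  have hlog : HasDerivAt (fun τ => Real.log (G τ)) (∫ x, q x * Δ x ∂μ) 0 := by
    have h := key.2.log (by rw [hG0]; norm_num)
    simpa [hG0] using h
  -- slope convergence along the punctured neighborhood, restricted to Ioo 0 1
  have hslope : Tendsto (fun τ => Real.log (G τ) / τ) (𝓝[Set.Ioo (0:ℝ) 1] 0)
      (𝓝 (∫ x, q x * Δ x ∂μ)) := by
    have h := hasDerivAt_iff_tendsto_slope.mp hlog
    have hmono : 𝓝[Set.Ioo (0:ℝ) 1] (0:ℝ) ≤ 𝓝[≠] (0:ℝ) := by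
      apply nhdsWithin_mono
      intro x hx
      exact ne_of_gt hx.1
    have := h.comp (tendsto_id.mono_left hmono)
    refine this.congr ?_
    intro τ
    simp [slope_def_field, hG0, div_eq_mul_inv, mul_comm]
  have hfactor : Tendsto (fun τ : ℝ => -(1 - τ)⁻¹) (𝓝[Set.Ioo (0:ℝ) 1] 0) (𝓝 (-1)) := by
    have : ContinuousAt (fun τ : ℝ => -(1 - τ)⁻¹) 0 := by
      apply ContinuousAt.neg
      apply ContinuousAt.inv₀ (by fun_prop) (by norm_num)
    simpa using this.continuousWithinAt.tendsto
  have hmul := hslope.mul hfactor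
  -- identify the limit value
  have hKL : (∫ x, q x * Δ x ∂μ) * (-1) = ∫ x, q x * Real.log (q x / p x) ∂μ := by
    rw [mul_neg_one, ← integral_neg]
    apply integral_congr_ae
    filter_upwards [hQP] with x hx
    rcases eq_or_lt_of_le (hq0 x) with h | h
    · simp [← h]
    · have hp : p x ≠ 0 := by
        intro hp0'
        exact absurd (hx hp0') h.ne'
      have hq : q x ≠ 0 := h.ne'
      rw [hΔdef]
      simp only
      rw [Real.log_div hp hq, Real.log_div hq hp]
      ring
  rw [← hKL]
  -- finally, identify the two functions eventually on Ioo 0 1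
  refine hmul.congr' ?_
  filter_upwards [self_mem_nhdsWithin] with τ hτ
  obtain ⟨hτ0, hτ1⟩ := hτ
  have hFG : ∫ x, p x ^ τ * q x ^ (1 - τ) ∂μ = G τ := by
    apply integral_congr_ae
    filter_upwards [hPQ, hQP] with x h1 h2
    rcases eq_or_lt_of_le (hq0 x) with hq | hq
    · have hp : p x = 0 := h1 hq.symm
      rw [hp, ← hq, Real.zero_rpow (ne_of_gt hτ0)]
      simp
    · have hp : 0 < p x := by
        rcases eq_or_lt_of_le (hp0 x) with hp' | hp'
        · exact absurd (h2 hp'.symm) hq.ne'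
        · exact hp'
      have hΔx : Δ x = Real.log (p x) - Real.log (q x) := by
        rw [hΔdef]; exact Real.log_div hp.ne' hq.ne'
      have hrhs : q x * Real.exp (τ * Δ x) = Real.exp (Real.log (q x) + τ * Δ x) := by
        rw [Real.exp_add, Real.exp_log hq]
      rw [Real.rpow_def_of_pos hp, Real.rpow_def_of_pos hq, ← Real.exp_add, hrhs, hΔx,
        Real.exp_eq_exp]
      ring
  rw [hFG]
  have h1τ : (1 : ℝ) - τ ≠ 0 := by linarith
  field_simp
end

section
/- Assume P ≪ Q, Q ≪ P, and ∫ p(x) e^{ε|Δ(x)|} dμ(x) < ∞ for some ε > 0. Then F(1) = 1 and the function τ ↦ F(τ) is differentiable at τ = 1 with derivative F′(1) = KL(P‖Q) = ∫ p(x) Δ(x) dμ(x). -/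
open MeasureTheory Real Filter Topology

/-- Assuming mutual absolute continuity (expressed at the level of densities)
and the exponential moment condition `∫ p e^{ε|Δ|} dμ < ∞` for some `ε > 0`, the Chernoff
coefficient `F(τ) = ∫ p^τ q^(1-τ) dμ` satisfies `F(1) = 1` and is differentiable at `τ = 1`
with derivative `F'(1) = KL(P‖Q) = ∫ p Δ dμ`, where `Δ = log(p/q)`. -/
theorem chernoff_hasDerivAt_one
    {X : Type*} [MeasurableSpace X] (μ : Measure X) [SigmaFinite μ]
    (p q : X → ℝ) (hpm : Measurable p) (hqm : Measurable q)
    (hp0 : ∀ x, 0 ≤ p x) (hq0 : ∀ x, 0 ≤ q x)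
    (hpi : Integrable p μ) (hqi : Integrable q μ)
    (hp1 : ∫ x, p x ∂μ = 1) (hq1 : ∫ x, q x ∂μ = 1)
    (hPQ : ∀ᵐ x ∂μ, q x = 0 → p x = 0)
    (hQP : ∀ᵐ x ∂μ, p x = 0 → q x = 0)
    (hexp : ∃ ε > (0 : ℝ),
      Integrable (fun x => p x * Real.exp (ε * |Real.log (p x / q x)|)) μ) :
    (∫ x, p x ^ (1 : ℝ) * q x ^ (1 - (1 : ℝ)) ∂μ) = 1 ∧
      HasDerivAt (fun τ : ℝ => ∫ x, p x ^ τ * q x ^ (1 - τ) ∂μ)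
        (∫ x, p x * Real.log (p x / q x) ∂μ) 1 := by
  obtain ⟨ε, hε, hint⟩ := hexp
  set Δ : X → ℝ := fun x => Real.log (p x / q x) with hΔ
  set F : ℝ → X → ℝ := fun τ x => p x * Real.exp ((τ - 1) * Δ x) with hF
  set F' : ℝ → X → ℝ := fun τ x => p x * Δ x * Real.exp ((τ - 1) * Δ x) with hF'
  have hΔm : Measurable Δ := (hpm.div hqm).log
  -- pointwise a.e. equality of the two integrands for τ ≠ 0
  have key : ∀ τ : ℝ, τ ≠ 0 →
      (fun x => p x ^ τ * q x ^ (1 - τ)) =ᵐ[μ] F τ := by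
    intro τ hτ
    filter_upwards [hPQ] with x hx
    rcases eq_or_lt_of_le (hp0 x) with hp | hp
    · simp [F, ← hp, Real.zero_rpow hτ]
    · have hq : 0 < q x := by
        rcases eq_or_lt_of_le (hq0 x) with h | h
        · exact absurd (hx h.symm) hp.ne'
        · exact h
      have : p x ^ τ * q x ^ (1 - τ)
          = p x * Real.exp ((τ - 1) * Real.log (p x / q x)) := by
        rw [Real.log_div hp.ne' hq.ne',
          Real.rpow_def_of_pos hp, Real.rpow_def_of_pos hq, ← Real.exp_add]
        conv_rhs => rw [← Real.exp_log hp]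
        rw [Real.log_exp, ← Real.exp_add]
        congr 1
        ring
      simpa [F] using this
  -- differentiation under the integral for F
  have hbound : Integrable (fun x => (2 / ε) * (p x * Real.exp (ε * |Δ x|))) μ :=
    hint.const_mul _
  have hmain : Integrable (F' 1) μ ∧
      HasDerivAt (fun τ => ∫ x, F τ x ∂μ) (∫ x, F' 1 x ∂μ) 1 := by
    apply hasDerivAt_integral_of_dominated_loc_of_deriv_le (Metric.ball_mem_nhds _ (half_pos hε))
      (bound := fun x => (2 / ε) * (p x * Real.exp (ε * |Δ x|)))
    · filter_upwards with τ
      exact (hpm.mul (((measurable_const.mul hΔm)).exp)).aestronglyMeasurable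
    · have : F 1 = p := by funext x; simp [F]
      rw [this]; exact hpi
    · exact ((hpm.mul hΔm).mul ((measurable_const.mul hΔm)).exp).aestronglyMeasurable
    · filter_upwards with x
      intro τ hτ
      have hτ' : |τ - 1| ≤ ε / 2 := le_of_lt (by simpa [Metric.mem_ball, Real.dist_eq] using hτ)
      have h1 : Real.exp ((τ - 1) * Δ x) ≤ Real.exp ((ε / 2) * |Δ x|) := by
        apply Real.exp_le_exp.mpr
        calc (τ - 1) * Δ x ≤ |(τ - 1) * Δ x| := le_abs_self _
          _ = |τ - 1| * |Δ x| := abs_mul _ _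
          _ ≤ (ε / 2) * |Δ x| := by
              exact mul_le_mul_of_nonneg_right hτ' (abs_nonneg _)
      have h2 : |Δ x| ≤ (2 / ε) * Real.exp ((ε / 2) * |Δ x|) := by
        have := Real.add_one_le_exp ((ε / 2) * |Δ x|)
        have h3 : (ε / 2) * |Δ x| ≤ Real.exp ((ε / 2) * |Δ x|) := by nlinarith [abs_nonneg (Δ x)]
        calc |Δ x| = (2 / ε) * ((ε / 2) * |Δ x|) := by field_simp
          _ ≤ (2 / ε) * Real.exp ((ε / 2) * |Δ x|) := by
              apply mul_le_mul_of_nonneg_left h3 (by positivity)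
      calc ‖F' τ x‖ = p x * |Δ x| * Real.exp ((τ - 1) * Δ x) := by
            simp [F', abs_mul, abs_of_nonneg (hp0 x), abs_of_pos (Real.exp_pos _)]
        _ ≤ p x * ((2 / ε) * Real.exp ((ε / 2) * |Δ x|)) * Real.exp ((ε / 2) * |Δ x|) := by
            exact mul_le_mul (mul_le_mul_of_nonneg_left h2 (hp0 x)) h1 (Real.exp_pos _).le
              (mul_nonneg (hp0 x) (by positivity))
        _ = (2 / ε) * (p x * (Real.exp ((ε / 2) * |Δ x|) * Real.exp ((ε / 2) * |Δ x|))) := by ring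
        _ = (2 / ε) * (p x * Real.exp (ε * |Δ x|)) := by
            rw [← Real.exp_add]; ring_nf
    · exact hbound
    · filter_upwards with x
      intro τ hτ
      have : HasDerivAt (fun τ : ℝ => p x * Real.exp ((τ - 1) * Δ x))
          (p x * (Real.exp ((τ - 1) * Δ x) * Δ x)) τ := by
        have h := (((hasDerivAt_id τ).sub_const 1).mul_const (Δ x)).exp
        simpa using h.const_mul (p x)
      simpa [F, F', mul_comm, mul_assoc, mul_left_comm] using this
  constructor
  · simp only [Real.rpow_one, sub_self, Real.rpow_zero, mul_one, hp1]
  · have heq : (fun τ : ℝ => ∫ x, p x ^ τ * q x ^ (1 - τ) ∂μ)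
        =ᶠ[𝓝 (1 : ℝ)] (fun τ => ∫ x, F τ x ∂μ) := by
      have : Set.Ioi (0 : ℝ) ∈ 𝓝 (1 : ℝ) := isOpen_Ioi.mem_nhds (by norm_num)
      filter_upwards [this] with τ hτ
      exact integral_congr_ae (key τ (ne_of_gt hτ))
    have hder := hmain.2
    have hder' : HasDerivAt (fun τ : ℝ => ∫ x, p x ^ τ * q x ^ (1 - τ) ∂μ)
        (∫ x, F' 1 x ∂μ) 1 := hder.congr_of_eventuallyEq heq
    have : (∫ x, F' 1 x ∂μ) = ∫ x, p x * Real.log (p x / q x) ∂μ := by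
      apply integral_congr_ae
      filter_upwards with x
      simp [F', Δ]
    rwa [this] at hder'
end

section
/- Assume P ≪ Q, Q ≪ P, and ∫ q(x) e^{ε|Δ(x)|} dμ(x) < ∞ for some ε > 0. Then F(0) = 1 and the function τ ↦ F(τ) is differentiable at τ = 0 with derivative F′(0) = −KL(Q‖P) = ∫ q(x) Δ(x) dμ(x). -/
open MeasureTheory Real Filter Topology

/-- Assuming mutual absolute continuity (expressed at the level of densities)
and the exponential moment condition `∫ q e^{ε|Δ|} dμ < ∞` for some `ε > 0`, the Chernoff
coefficient `F(τ) = ∫ p^τ q^(1-τ) dμ` satisfies `F(0) = 1` and is differentiable at `τ = 0`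
with derivative `F'(0) = ∫ q Δ dμ = -KL(Q‖P)`, where `Δ = log(p/q)`. -/
theorem chernoff_hasDerivAt_zero
    {X : Type*} [MeasurableSpace X] (μ : Measure X) [SigmaFinite μ]
    (p q : X → ℝ) (hpm : Measurable p) (hqm : Measurable q)
    (hp0 : ∀ x, 0 ≤ p x) (hq0 : ∀ x, 0 ≤ q x)
    (hpi : Integrable p μ) (hqi : Integrable q μ)
    (hp1 : ∫ x, p x ∂μ = 1) (hq1 : ∫ x, q x ∂μ = 1)
    (hPQ : ∀ᵐ x ∂μ, q x = 0 → p x = 0)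
    (hQP : ∀ᵐ x ∂μ, p x = 0 → q x = 0)
    (hexp : ∃ ε > (0 : ℝ),
      Integrable (fun x => q x * Real.exp (ε * |Real.log (p x / q x)|)) μ) :
    (∫ x, p x ^ (0 : ℝ) * q x ^ (1 - (0 : ℝ)) ∂μ) = 1 ∧
      HasDerivAt (fun τ : ℝ => ∫ x, p x ^ τ * q x ^ (1 - τ) ∂μ)
        (∫ x, q x * Real.log (p x / q x) ∂μ) 0 ∧
      (∫ x, q x * Real.log (p x / q x) ∂μ) =
        -(∫ x, q x * Real.log (q x / p x) ∂μ) := by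
  obtain ⟨ε, hε, hint⟩ := hexp
  set Δ : X → ℝ := fun x => Real.log (p x / q x) with hΔdef
  have hmeasΔ : Measurable Δ := (hpm.div hqm).log
  -- third claim
  have h3 : (∫ x, q x * Real.log (p x / q x) ∂μ) =
      -(∫ x, q x * Real.log (q x / p x) ∂μ) := by
    rw [← integral_neg]
    congr 1; funext x
    rw [show p x / q x = (q x / p x)⁻¹ by rw [inv_div], Real.log_inv]
    ring
  have h1 : (∫ x, p x ^ (0 : ℝ) * q x ^ (1 - (0 : ℝ)) ∂μ) = 1 := by
    simp only [Real.rpow_zero, sub_zero, Real.rpow_one, one_mul]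
    exact hq1
  refine ⟨h1, ?_, h3⟩
  -- derivative of the auxiliary function G τ = ∫ q exp(Δ τ)
  have hderivG : Integrable (fun a => q a * Δ a * Real.exp (Δ a * 0)) μ ∧
      HasDerivAt (fun τ : ℝ => ∫ x, q x * Real.exp (Δ x * τ) ∂μ)
        (∫ x, q x * Δ x * Real.exp (Δ x * 0) ∂μ) 0 := by
    apply hasDerivAt_integral_of_dominated_loc_of_deriv_le (s := Metric.ball 0 (ε / 2))
      (bound := fun a => (2 / ε) * (q a * Real.exp (ε * |Δ a|)))
      (F' := fun τ a => q a * Δ a * Real.exp (Δ a * τ))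
    · exact Metric.ball_mem_nhds _ (half_pos hε)
    · filter_upwards with τ
      exact (hqm.mul ((hmeasΔ.mul_const τ).exp)).aestronglyMeasurable
    · simpa using hqi
    · exact ((hqm.mul hmeasΔ).mul ((hmeasΔ.mul_const 0).exp)).aestronglyMeasurable
    · filter_upwards with a τ hτ
      have hq := hq0 a
      rw [Real.norm_eq_abs, abs_mul, abs_mul, abs_of_nonneg hq, Real.abs_exp]
      have h1 : Real.exp (Δ a * τ) ≤ Real.exp (ε / 2 * |Δ a|) := by
        apply Real.exp_le_exp.2
        calc Δ a * τ ≤ |Δ a * τ| := le_abs_self _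
        _ = |Δ a| * |τ| := abs_mul _ _
        _ ≤ |Δ a| * (ε / 2) := by
            apply mul_le_mul_of_nonneg_left _ (abs_nonneg _)
            have := Metric.mem_ball.1 hτ
            rw [Real.dist_eq, sub_zero] at this
            exact this.le
        _ = ε / 2 * |Δ a| := mul_comm _ _
      have h2 : |Δ a| ≤ (2 / ε) * Real.exp (ε / 2 * |Δ a|) := by
        have hx : ε / 2 * |Δ a| ≤ Real.exp (ε / 2 * |Δ a|) :=
          le_trans (by linarith [Real.add_one_le_exp (ε / 2 * |Δ a|)])
            le_rfl
        calc |Δ a| = (2 / ε) * (ε / 2 * |Δ a|) := by field_simp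
        _ ≤ (2 / ε) * Real.exp (ε / 2 * |Δ a|) := by
            apply mul_le_mul_of_nonneg_left hx (by positivity)
      calc q a * |Δ a| * Real.exp (Δ a * τ)
          ≤ q a * ((2 / ε) * Real.exp (ε / 2 * |Δ a|)) * Real.exp (ε / 2 * |Δ a|) := by
            apply mul_le_mul (mul_le_mul_of_nonneg_left h2 hq) h1 (Real.exp_pos _).le
            positivity
        _ = 2 / ε * (q a * Real.exp (ε / 2 * |Δ a| + ε / 2 * |Δ a|)) := by
            rw [Real.exp_add]; ring
        _ = (2 / ε) * (q a * Real.exp (ε * |Δ a|)) := by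
            rw [show ε / 2 * |Δ a| + ε / 2 * |Δ a| = ε * |Δ a| by ring]
    · exact hint.const_mul _
    · filter_upwards with a τ hτ
      have : HasDerivAt (fun τ : ℝ => Δ a * τ) (Δ a) τ := by
        simpa using (hasDerivAt_id τ).const_mul (Δ a)
      have := (this.exp).const_mul (q a)
      convert this using 1
      · rfl
      ring
  -- identify F with G near 0
  have heq : (fun τ : ℝ => ∫ x, p x ^ τ * q x ^ (1 - τ) ∂μ) =ᶠ[𝓝 (0 : ℝ)]
      (fun τ : ℝ => ∫ x, q x * Real.exp (Δ x * τ) ∂μ) := by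
    filter_upwards [Metric.ball_mem_nhds (0 : ℝ) one_pos] with τ hτ
    have hτ1 : 1 - τ ≠ 0 := by
      have : |τ| < 1 := by simpa [Real.dist_eq] using hτ
      have := abs_lt.1 this
      linarith
    apply integral_congr_ae
    filter_upwards [hQP] with x hx
    rcases eq_or_lt_of_le (hq0 x) with hq | hq
    · rw [← hq, Real.zero_rpow hτ1]
      simp
    · have hp : 0 < p x := by
        rcases eq_or_lt_of_le (hp0 x) with h | h
        · exact absurd (hx h.symm) hq.ne'
        · exact h
      have hpq : 0 < p x / q x := div_pos hp hq
      have e1 : Real.exp (Δ x * τ) = (p x / q x) ^ τ :=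
        (Real.rpow_def_of_pos hpq τ).symm
      rw [e1, Real.div_rpow (hp0 x) (hq0 x), Real.rpow_sub hq, Real.rpow_one]
      have hqτ : q x ^ τ ≠ 0 := by positivity
      field_simp
  have hG := hderivG.2
  simp only [mul_zero, Real.exp_zero, mul_one] at hG
  exact hG.congr_of_eventuallyEq heq
end

section
/- Let P and Q be probability measures on a countable space with probability mass functions p and q, with P ≪ Q, and assume Σ_x p(x) e^{ε|log(p(x)/q(x))|} < ∞ for some ε > 0. Then the Cressie–Read power divergence CR_λ(P‖Q) converges to the forward KL divergence KL(P‖Q) = Σ_x p(x) log(p(x)/q(x)) as λ → 0. -/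
open Real Filter Topology

lemma abs_exp_sub_one_le' (t : ℝ) : |Real.exp t - 1| ≤ |t| * Real.exp |t| := by
  rcases le_or_gt 0 t with ht | ht
  · rw [abs_of_nonneg ht, abs_of_nonneg (sub_nonneg.2 (Real.one_le_exp ht))]
    have h1 : 1 - t ≤ Real.exp (-t) := by linarith [Real.add_one_le_exp (-t)]
    have h2 : Real.exp (-t) * Real.exp t = 1 := by rw [← Real.exp_add]; simp
    nlinarith [Real.exp_pos t]
  · rw [abs_of_neg ht, abs_of_nonpos (sub_nonpos.2 (Real.exp_le_one_iff.2 ht.le))]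
    have h1 := Real.add_one_le_exp t
    have h3 : (1:ℝ) ≤ Real.exp (-t) := Real.one_le_exp (by linarith)
    nlinarith

/-- Let `p, q` be probability mass functions on a countable space with
`P ≪ Q` and `Σₓ p(x) e^{ε|log(p(x)/q(x))|} < ∞` for some `ε > 0`. Then the Cressie–Read
power divergence `CR_λ(P‖Q) = (1/(λ(λ+1))) Σₓ p(x)[(p(x)/q(x))^λ - 1]` converges to the
forward KL divergence `KL(P‖Q) = Σₓ p(x) log(p(x)/q(x))` as `λ → 0` (with `λ ∉ {0,-1}`). -/
theorem cressieRead_tendsto_forwardKL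
    {X : Type*} [Countable X] (p q : X → ℝ)
    (hp0 : ∀ x, 0 ≤ p x) (hq0 : ∀ x, 0 ≤ q x)
    (hps : Summable p) (hqs : Summable q)
    (hp1 : ∑' x, p x = 1) (hq1 : ∑' x, q x = 1)
    (hac : ∀ x, q x = 0 → p x = 0)
    (hexp : ∃ ε > (0 : ℝ),
      Summable (fun x => p x * Real.exp (ε * |Real.log (p x / q x)|))) :
    Tendsto (fun l : ℝ => (1 / (l * (l + 1))) * ∑' x, p x * ((p x / q x) ^ l - 1))
      (𝓝[{(0 : ℝ), -1}ᶜ] 0)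
      (𝓝 (∑' x, p x * Real.log (p x / q x))) := by
  obtain ⟨ε, hε, hsum⟩ := hexp
  set c : X → ℝ := fun x => Real.log (p x / q x) with hc
  set bound : X → ℝ := fun x => (2 / ε) * (p x * Real.exp (ε * |c x|)) with hb
  have hbsum : Summable bound := hsum.mul_left _
  have hsub : ({(0 : ℝ), -1} : Set ℝ)ᶜ ⊆ {(0:ℝ)}ᶜ := by
    intro y hy
    simp only [Set.mem_compl_iff, Set.mem_insert_iff, Set.mem_singleton_iff, not_or] at hy ⊢
    exact hy.1
  -- main dominated convergence step
  have hG : Tendsto (fun l : ℝ => ∑' x, p x * (((p x / q x) ^ l - 1) / l))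
      (𝓝[{(0 : ℝ), -1}ᶜ] 0) (𝓝 (∑' x, p x * c x)) := by
    apply tendsto_tsum_of_dominated_convergence hbsum
    · intro x
      rcases (hp0 x).eq_or_lt with hpx | hpx
      · simpa [← hpx] using tendsto_const_nhds
      · have hqx : 0 < q x := by
          rcases (hq0 x).eq_or_lt with h | h
          · exact absurd (hac x h.symm) (ne_of_gt hpx)
          · exact h
        have hr : 0 < p x / q x := div_pos hpx hqx
        have hder : HasDerivAt (fun l : ℝ => (p x / q x) ^ l) (c x) 0 := by
          have := (hasStrictDerivAt_const_rpow hr (0 : ℝ)).hasDerivAt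
          simpa [hc] using this
        have hslope := hasDerivAt_iff_tendsto_slope.mp hder
        have hslope' : Tendsto (fun l : ℝ => ((p x / q x) ^ l - 1) / l)
            (𝓝[≠] (0:ℝ)) (𝓝 (c x)) := by
          refine hslope.congr fun l => ?_
          simp [slope_def_field, div_eq_inv_mul, Real.rpow_zero]
        exact (hslope'.mono_left (nhdsWithin_mono 0 hsub)).const_mul _
    · have hA : ∀ᶠ l : ℝ in 𝓝[{(0 : ℝ), -1}ᶜ] 0, |l| ≤ ε / 2 := by
        have : ∀ᶠ l : ℝ in 𝓝 0, |l| ≤ ε / 2 := by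
          have := Metric.ball_mem_nhds (0:ℝ) (half_pos hε)
          filter_upwards [this] with l hl
          rw [Metric.mem_ball, Real.dist_eq, sub_zero] at hl
          exact hl.le
        exact this.filter_mono nhdsWithin_le_nhds
      filter_upwards [hA, self_mem_nhdsWithin] with l hl hlmem x
      have hl0 : l ≠ 0 := by
        simp only [Set.mem_compl_iff, Set.mem_insert_iff, Set.mem_singleton_iff,
          not_or] at hlmem
        exact hlmem.1
      rcases (hp0 x).eq_or_lt with hpx | hpx
      · simp [← hpx, hb]
      · have hqx : 0 < q x := by
          rcases (hq0 x).eq_or_lt with h | h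
          · exact absurd (hac x h.symm) (ne_of_gt hpx)
          · exact h
        have hr : 0 < p x / q x := div_pos hpx hqx
        have key : |(((p x / q x) ^ l - 1) / l)| ≤ (2 / ε) * Real.exp (ε * |c x|) := by
          rw [abs_div, div_le_iff₀ (abs_pos.2 hl0)]
          have e1 : (p x / q x) ^ l = Real.exp (c x * l) := by
            rw [Real.rpow_def_of_pos hr]
          rw [e1]
          set t := |c x| with ht
          set s := |l| with hs
          have ht0 : 0 ≤ t := abs_nonneg _
          have hs0 : 0 ≤ s := abs_nonneg _
          have habs : |c x * l| = t * s := abs_mul _ _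
          calc |Real.exp (c x * l) - 1| ≤ |c x * l| * Real.exp |c x * l| :=
                abs_exp_sub_one_le' _
            _ = t * s * Real.exp (t * s) := by rw [habs]
            _ ≤ 2 / ε * Real.exp (ε * t) * s := by
                have f1 : Real.exp (t * s) ≤ Real.exp (t * (ε / 2)) :=
                  Real.exp_le_exp.2 (by nlinarith)
                have f2 : t ≤ 2 / ε * Real.exp (ε / 2 * t) := by
                  have h1 := Real.add_one_le_exp (ε / 2 * t)
                  have h2 : 0 < 2 / ε := by positivity
                  have hkey : 2 / ε * (ε / 2 * t + 1) ≤ 2 / ε * Real.exp (ε / 2 * t) :=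
                    mul_le_mul_of_nonneg_left h1 h2.le
                  have hid : 2 / ε * (ε / 2 * t + 1) = t + 2 / ε := by
                    field_simp
                  linarith
                have f3 : Real.exp (ε / 2 * t) * Real.exp (ε / 2 * t)
                    = Real.exp (ε * t) := by
                  rw [← Real.exp_add]; ring_nf
                have f4 : Real.exp (t * (ε / 2)) = Real.exp (ε / 2 * t) := by ring_nf
                have e2 : 0 < Real.exp (ε / 2 * t) := Real.exp_pos _
                have g1 : t * Real.exp (t * s) ≤ t * Real.exp (t * (ε / 2)) :=
                  mul_le_mul_of_nonneg_left f1 ht0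
                have g2 : t * Real.exp (t * (ε / 2))
                    ≤ 2 / ε * Real.exp (ε / 2 * t) * Real.exp (ε / 2 * t) := by
                  rw [f4]; exact mul_le_mul_of_nonneg_right f2 e2.le
                have g3 : 2 / ε * Real.exp (ε / 2 * t) * Real.exp (ε / 2 * t)
                    = 2 / ε * Real.exp (ε * t) := by rw [mul_assoc, f3]
                have g := mul_le_mul_of_nonneg_right ((g1.trans g2).trans_eq g3) hs0
                nlinarith [g]
        calc ‖p x * (((p x / q x) ^ l - 1) / l)‖
            = p x * |(((p x / q x) ^ l - 1) / l)| := by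
              rw [norm_mul, Real.norm_eq_abs, Real.norm_eq_abs, abs_of_pos hpx]
          _ ≤ p x * (2 / ε * Real.exp (ε * |c x|)) :=
              mul_le_mul_of_nonneg_left key hpx.le
          _ = bound x := by rw [hb]; ring
  -- assemble
  have h1 : Tendsto (fun l : ℝ => 1 / (l + 1)) (𝓝[{(0 : ℝ), -1}ᶜ] 0) (𝓝 1) := by
    have hcont : ContinuousAt (fun l : ℝ => 1 / (l + 1)) 0 := by
      apply ContinuousAt.div continuousAt_const (by fun_prop)
      norm_num
    have := hcont.tendsto.mono_left (nhdsWithin_le_nhds (s := ({(0 : ℝ), -1} : Set ℝ)ᶜ))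
    simpa using this
  have hmul := h1.mul hG
  rw [one_mul] at hmul
  refine hmul.congr' ?_
  filter_upwards [self_mem_nhdsWithin] with l hl
  simp only [Set.mem_compl_iff, Set.mem_insert_iff, Set.mem_singleton_iff, not_or] at hl
  obtain ⟨hl0, hl1⟩ := hl
  have hl1' : l + 1 ≠ 0 := by intro h; apply hl1; linarith
  have hts : ∑' x, p x * (((p x / q x) ^ l - 1) / l)
      = (∑' x, p x * ((p x / q x) ^ l - 1)) / l := by
    rw [← tsum_div_const]
    congr 1
    funext x
    rw [mul_div_assoc]
  rw [hts]
  set S := ∑' x : X, p x * ((p x / q x) ^ l - 1) with hS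
  field_simp
end

section
/- Assume P ≪ Q and ∫ p(x) e^{ε|Δ(x)|} dμ(x) < ∞ for some ε > 0, and write K = KL(P‖Q) and V = Var_P[Δ] = ∫ p Δ² dμ − K². Then, as τ → 0, the standard Cressie–Read divergence satisfies CR_τ(P‖Q) = K + (τ/2)V + τ(K²/2 − K) + O(τ²); that is, the function τ ↦ CR_τ(P‖Q) − K − τ(V/2 + K²/2 − K) is O(τ²) as τ → 0. -/
open MeasureTheory Real Filter Topology Asymptotics

lemma aux_pow_le_exp (u : ℝ) (hu : 0 ≤ u) (n : ℕ) : u ^ n ≤ n.factorial * Real.exp u := by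
  have h := Real.sum_le_exp_of_nonneg hu (n + 1)
  have hterm : u ^ n / n.factorial ≤ ∑ i ∈ Finset.range (n+1), u ^ i / i.factorial := by
    refine Finset.single_le_sum (f := fun i => u ^ i / i.factorial) (fun i _ => by positivity)
      (Finset.self_mem_range_succ n)
  have : u ^ n / n.factorial ≤ Real.exp u := hterm.trans h
  have hf : (0:ℝ) < n.factorial := by positivity
  calc u ^ n = n.factorial * (u ^ n / n.factorial) := by field_simp
    _ ≤ n.factorial * Real.exp u := by
        exact mul_le_mul_of_nonneg_left this hf.le

lemma aux_exp_taylor (t : ℝ) :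
    |Real.exp t - 1 - t - t ^ 2 / 2| ≤ 4 * |t| ^ 3 * Real.exp |t| := by
  rcases le_or_gt |t| 1 with h | h
  · have := Real.exp_bound h (n := 3) (by norm_num)
    have hsum : ∑ i ∈ Finset.range 3, t ^ i / i.factorial = 1 + t + t ^ 2 / 2 := by
      norm_num [Finset.sum_range_succ]
    rw [hsum] at this
    have h1 : |Real.exp t - 1 - t - t ^ 2 / 2| ≤ |t| ^ 3 * ((3:ℕ).succ / ((3:ℕ).factorial * 3)) := by
      convert this using 2; ring
      norm_num
    have h2 : ((3:ℕ).succ / ((3:ℕ).factorial * 3) : ℝ) ≤ 4 := by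
      norm_num [Nat.factorial]
    have h3 : (1:ℝ) ≤ Real.exp |t| := Real.one_le_exp (abs_nonneg t)
    nlinarith [pow_nonneg (abs_nonneg t) 3]
  · have h1 : |Real.exp t - 1 - t - t ^ 2 / 2| ≤ Real.exp |t| + 1 + |t| + t ^ 2 / 2 := by
      have := abs_add_le (Real.exp t - 1 - t) (-(t^2/2))
      have e1 : |Real.exp t| ≤ Real.exp |t| := by
        rw [abs_of_pos (Real.exp_pos t)]; exact Real.exp_le_exp.2 (le_abs_self t)
      calc |Real.exp t - 1 - t - t ^ 2 / 2|
          ≤ |Real.exp t| + |(1:ℝ)| + |t| + |t ^ 2 / 2| := by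
            have := abs_sub (Real.exp t - 1 - t) (t ^ 2 / 2)
            have := abs_sub (Real.exp t - 1) t
            have := abs_sub (Real.exp t) 1
            calc |Real.exp t - 1 - t - t ^ 2 / 2| ≤ |Real.exp t - 1 - t| + |t^2/2| := abs_sub _ _
              _ ≤ (|Real.exp t - 1| + |t|) + |t^2/2| := by gcongr
              _ ≤ ((|Real.exp t| + |(1:ℝ)|) + |t|) + |t^2/2| := by gcongr
              _ = |Real.exp t| + |(1:ℝ)| + |t| + |t ^ 2 / 2| := by ring
        _ ≤ Real.exp |t| + 1 + |t| + t ^ 2 / 2 := by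
            rw [abs_one, abs_div, abs_two, abs_pow, sq_abs]
            gcongr
    have h2 : (1:ℝ) ≤ Real.exp |t| := Real.one_le_exp (abs_nonneg t)
    have h3 : |t| ≤ Real.exp |t| := (le_add_of_nonneg_right zero_le_one).trans (Real.add_one_le_exp _)
    have h4 : t ^ 2 = |t| ^ 2 := (sq_abs t).symm
    have h6 : |t| ^ 2 ≤ 2 * Real.exp |t| := by
      have := aux_pow_le_exp |t| (abs_nonneg t) 2
      simpa using this
    have h5 : (1:ℝ) ≤ |t| ^ 3 := one_le_pow₀ h.le
    have hexp0 : (0:ℝ) < Real.exp |t| := Real.exp_pos _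
    nlinarith [h1, h2, h3, h5, h6, hexp0]

lemma aux_dom (ε τ d P : ℝ) (hε : 0 < ε) (hτ : |τ| ≤ ε / 2) (hP : 0 ≤ P) :
    |P * (Real.exp (τ * d) - 1 - τ * d - (τ * d) ^ 2 / 2)|
      ≤ 24 * (2 / ε) ^ 3 * |τ| ^ 3 * (P * Real.exp (ε * |d|)) := by
  have ht : |τ * d| ≤ ε / 2 * |d| := by
    rw [abs_mul]; exact mul_le_mul_of_nonneg_right hτ (abs_nonneg d)
  have h1 := aux_exp_taylor (τ * d)
  have h2 : Real.exp |τ * d| ≤ Real.exp (ε / 2 * |d|) := Real.exp_le_exp.2 ht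
  have h3 : |d| ^ 3 ≤ 6 * (2 / ε) ^ 3 * Real.exp (ε / 2 * |d|) := by
    have hle := aux_pow_le_exp (ε / 2 * |d|) (by positivity) 3
    have key : (ε / 2) ^ 3 * |d| ^ 3 ≤ 6 * Real.exp (ε / 2 * |d|) := by
      calc (ε / 2) ^ 3 * |d| ^ 3 = (ε / 2 * |d|) ^ 3 := by ring
        _ ≤ 6 * Real.exp (ε / 2 * |d|) := by
            simpa [Nat.factorial] using hle
    have hpos : (0:ℝ) < (ε / 2) ^ 3 := by positivity
    calc |d| ^ 3 = (2 / ε) ^ 3 * ((ε / 2) ^ 3 * |d| ^ 3) := by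
          field_simp
      _ ≤ (2 / ε) ^ 3 * (6 * Real.exp (ε / 2 * |d|)) := by
          exact mul_le_mul_of_nonneg_left key (by positivity)
      _ = 6 * (2 / ε) ^ 3 * Real.exp (ε / 2 * |d|) := by ring
  have hee : Real.exp (ε / 2 * |d|) * Real.exp (ε / 2 * |d|) = Real.exp (ε * |d|) := by
    rw [← Real.exp_add]; ring_nf
  have h4 : |τ * d| ^ 3 = |τ| ^ 3 * |d| ^ 3 := by rw [abs_mul, mul_pow]
  calc |P * (Real.exp (τ * d) - 1 - τ * d - (τ * d) ^ 2 / 2)|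
      = P * |Real.exp (τ * d) - 1 - τ * d - (τ * d) ^ 2 / 2| := by
        rw [abs_mul, abs_of_nonneg hP]
    _ ≤ P * (4 * |τ * d| ^ 3 * Real.exp |τ * d|) := mul_le_mul_of_nonneg_left h1 hP
    _ = P * (4 * (|τ| ^ 3 * |d| ^ 3) * Real.exp |τ * d|) := by rw [h4]
    _ ≤ P * (4 * (|τ| ^ 3 * (6 * (2 / ε) ^ 3 * Real.exp (ε / 2 * |d|))) *
          Real.exp (ε / 2 * |d|)) := by
        gcongr
    _ = 24 * (2 / ε) ^ 3 * |τ| ^ 3 *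
          (P * (Real.exp (ε / 2 * |d|) * Real.exp (ε / 2 * |d|))) := by ring
    _ = 24 * (2 / ε) ^ 3 * |τ| ^ 3 * (P * Real.exp (ε * |d|)) := by rw [hee]

lemma aux_main {X : Type*} [MeasurableSpace X] (μ : Measure X)
    (p D : X → ℝ) (hpm : Measurable p) (hDm : Measurable D)
    (hp0 : ∀ x, 0 ≤ p x) (hpi : Integrable p μ) (ε : ℝ) (hε : 0 < ε)
    (hg : Integrable (fun x => p x * Real.exp (ε * |D x|)) μ)
    (τ : ℝ) (hτ : |τ| ≤ ε / 2) :
    |(∫ x, p x * (Real.exp (τ * D x) - 1) ∂μ)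
        - (τ * (∫ x, p x * D x ∂μ) + τ ^ 2 * ((∫ x, p x * D x ^ 2 ∂μ) / 2))|
      ≤ 24 * (2 / ε) ^ 3 * (∫ x, p x * Real.exp (ε * |D x|) ∂μ) * |τ| ^ 3 := by
  have hu_le : ∀ u : ℝ, u ≤ Real.exp u := fun u => by linarith [Real.add_one_le_exp u]
  have h1i : Integrable (fun x => p x * D x) μ := by
    refine (hg.const_mul (1 / ε)).mono' (hpm.mul hDm).aestronglyMeasurable
      (ae_of_all _ fun x => ?_)
    have h : |D x| ≤ 1 / ε * Real.exp (ε * |D x|) := by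
      have h := hu_le (ε * |D x|)
      calc |D x| = 1 / ε * (ε * |D x|) := by field_simp
        _ ≤ 1 / ε * Real.exp (ε * |D x|) := by
            exact mul_le_mul_of_nonneg_left h (by positivity)
    calc ‖p x * D x‖ = p x * |D x| := by
          rw [Real.norm_eq_abs, abs_mul, abs_of_nonneg (hp0 x)]
      _ ≤ p x * (1 / ε * Real.exp (ε * |D x|)) := mul_le_mul_of_nonneg_left h (hp0 x)
      _ = 1 / ε * (p x * Real.exp (ε * |D x|)) := by ring
  have h2i : Integrable (fun x => p x * D x ^ 2) μ := by
    refine (hg.const_mul (2 / ε ^ 2)).mono' (hpm.mul (hDm.pow_const 2)).aestronglyMeasurable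
      (ae_of_all _ fun x => ?_)
    have h : D x ^ 2 ≤ 2 / ε ^ 2 * Real.exp (ε * |D x|) := by
      have h := aux_pow_le_exp (ε * |D x|) (by positivity) 2
      have h2 : (ε * |D x|) ^ 2 ≤ 2 * Real.exp (ε * |D x|) := by
        simpa [Nat.factorial] using h
      have h3 : (ε * |D x|) ^ 2 = ε ^ 2 * D x ^ 2 := by
        rw [mul_pow, sq_abs]
      rw [h3] at h2
      calc D x ^ 2 = 1 / ε ^ 2 * (ε ^ 2 * D x ^ 2) := by field_simp
        _ ≤ 1 / ε ^ 2 * (2 * Real.exp (ε * |D x|)) :=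
            mul_le_mul_of_nonneg_left h2 (by positivity)
        _ = 2 / ε ^ 2 * Real.exp (ε * |D x|) := by ring
    calc ‖p x * D x ^ 2‖ = p x * D x ^ 2 := by
          rw [Real.norm_eq_abs, abs_of_nonneg (mul_nonneg (hp0 x) (sq_nonneg _))]
      _ ≤ p x * (2 / ε ^ 2 * Real.exp (ε * |D x|)) := mul_le_mul_of_nonneg_left h (hp0 x)
      _ = 2 / ε ^ 2 * (p x * Real.exp (ε * |D x|)) := by ring
  have h3i : Integrable (fun x => p x * (Real.exp (τ * D x) - 1)) μ := by
    refine (hg.add hpi).mono'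
      (hpm.mul (((measurable_const.mul hDm).exp).sub measurable_const)).aestronglyMeasurable
      (ae_of_all _ fun x => ?_)
    have h : |Real.exp (τ * D x) - 1| ≤ Real.exp (ε * |D x|) + 1 := by
      calc |Real.exp (τ * D x) - 1| ≤ |Real.exp (τ * D x)| + |(1:ℝ)| := abs_sub _ _
        _ = Real.exp (τ * D x) + 1 := by
            rw [abs_of_pos (Real.exp_pos _), abs_one]
        _ ≤ Real.exp (ε * |D x|) + 1 := by
            have hb : τ * D x ≤ ε * |D x| := by
              calc τ * D x ≤ |τ * D x| := le_abs_self _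
                _ = |τ| * |D x| := abs_mul _ _
                _ ≤ ε * |D x| := mul_le_mul_of_nonneg_right (by linarith) (abs_nonneg _)
            exact add_le_add (Real.exp_le_exp.2 hb) le_rfl
    calc ‖p x * (Real.exp (τ * D x) - 1)‖ = p x * |Real.exp (τ * D x) - 1| := by
          rw [Real.norm_eq_abs, abs_mul, abs_of_nonneg (hp0 x)]
      _ ≤ p x * (Real.exp (ε * |D x|) + 1) := mul_le_mul_of_nonneg_left h (hp0 x)
      _ = p x * Real.exp (ε * |D x|) + p x := by ring
  have hid : (fun x => p x * (Real.exp (τ * D x) - 1 - τ * D x - (τ * D x) ^ 2 / 2))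
      = fun x => p x * (Real.exp (τ * D x) - 1) - τ * (p x * D x)
          - τ ^ 2 / 2 * (p x * D x ^ 2) := by
    funext x; ring
  have hint : Integrable
      (fun x => p x * (Real.exp (τ * D x) - 1 - τ * D x - (τ * D x) ^ 2 / 2)) μ := by
    rw [hid]
    exact Integrable.sub (h3i.sub (h1i.const_mul τ)) (h2i.const_mul (τ ^ 2 / 2))
  have hval : ∫ x, p x * (Real.exp (τ * D x) - 1 - τ * D x - (τ * D x) ^ 2 / 2) ∂μ
      = (∫ x, p x * (Real.exp (τ * D x) - 1) ∂μ)
        - (τ * (∫ x, p x * D x ∂μ) + τ ^ 2 * ((∫ x, p x * D x ^ 2 ∂μ) / 2)) := by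
    have i1 : Integrable (fun x => p x * (Real.exp (τ * D x) - 1) - τ * (p x * D x)) μ :=
      h3i.sub (h1i.const_mul τ)
    rw [hid, integral_sub i1 (h2i.const_mul (τ ^ 2 / 2)),
      integral_sub h3i (h1i.const_mul τ), integral_const_mul, integral_const_mul]
    ring
  rw [← hval]
  calc |∫ x, p x * (Real.exp (τ * D x) - 1 - τ * D x - (τ * D x) ^ 2 / 2) ∂μ|
      ≤ ∫ x, |p x * (Real.exp (τ * D x) - 1 - τ * D x - (τ * D x) ^ 2 / 2)| ∂μ := by
        exact abs_integral_le_integral_abs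
    _ ≤ ∫ x, 24 * (2 / ε) ^ 3 * |τ| ^ 3 * (p x * Real.exp (ε * |D x|)) ∂μ := by
        refine integral_mono hint.abs (hg.const_mul _) fun x => ?_
        exact aux_dom ε τ (D x) (p x) hε hτ (hp0 x)
    _ = 24 * (2 / ε) ^ 3 * (∫ x, p x * Real.exp (ε * |D x|) ∂μ) * |τ| ^ 3 := by
        rw [integral_const_mul]; ring

/-- Assume `P ≪ Q` (at the level of densities) and
`∫ p e^{ε|Δ|} dμ < ∞` for some `ε > 0`, where `Δ = log(p/q)`. With `K = KL(P‖Q)` and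
`V = Var_P[Δ] = ∫ p Δ² dμ - K²`, the standard Cressie–Read divergence
`CR_τ(P‖Q) = (1/(τ(τ+1))) ∫ p [(p/q)^τ - 1] dμ` satisfies
`CR_τ(P‖Q) = K + (τ/2)V + τ(K²/2 - K) + O(τ²)` as `τ → 0`. -/
theorem cressieRead_surprisal_variance_expansion
    {X : Type*} [MeasurableSpace X] (μ : Measure X) [SigmaFinite μ]
    (p q : X → ℝ) (hpm : Measurable p) (hqm : Measurable q)
    (hp0 : ∀ x, 0 ≤ p x) (hq0 : ∀ x, 0 ≤ q x)
    (hpi : Integrable p μ) (hqi : Integrable q μ)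
    (hp1 : ∫ x, p x ∂μ = 1) (hq1 : ∫ x, q x ∂μ = 1)
    (hac : ∀ᵐ x ∂μ, q x = 0 → p x = 0)
    (hexp : ∃ ε > (0 : ℝ),
      Integrable (fun x => p x * Real.exp (ε * |Real.log (p x / q x)|)) μ)
    (K V : ℝ)
    (hK : K = ∫ x, p x * Real.log (p x / q x) ∂μ)
    (hV : V = (∫ x, p x * (Real.log (p x / q x)) ^ 2 ∂μ) - K ^ 2) :
    (fun τ : ℝ =>
        (1 / (τ * (τ + 1))) * (∫ x, p x * ((p x / q x) ^ τ - 1) ∂μ)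
          - K - τ * (V / 2 + K ^ 2 / 2 - K))
      =O[𝓝[≠] 0] (fun τ : ℝ => τ ^ 2) := by
  obtain ⟨ε, hε, hg⟩ := hexp
  have hDm : Measurable (fun x => Real.log (p x / q x)) :=
    Real.measurable_log.comp (hpm.div hqm)
  have hM0 : 0 ≤ ∫ x, p x * Real.exp (ε * |Real.log (p x / q x)|) ∂μ :=
    integral_nonneg fun x => mul_nonneg (hp0 x) (Real.exp_pos _).le
  set M : ℝ := ∫ x, p x * Real.exp (ε * |Real.log (p x / q x)|) ∂μ with hMdef
  set L : ℝ := V / 2 + K ^ 2 / 2 - K with hLdef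
  rw [isBigO_iff]
  refine ⟨2 * (24 * (2 / ε) ^ 3 * M + |L|), ?_⟩
  have hδ : (0:ℝ) < min (ε / 2) 2⁻¹ := by positivity
  have hev : ∀ᶠ τ in 𝓝 (0:ℝ), |τ| < min (ε / 2) 2⁻¹ := by
    filter_upwards [Metric.ball_mem_nhds (0:ℝ) hδ] with τ hτ
    simpa [Real.dist_eq] using hτ
  filter_upwards [eventually_nhdsWithin_of_eventually_nhds hev, self_mem_nhdsWithin]
    with τ hτδ hτ0
  have hτ0' : τ ≠ 0 := hτ0
  have hτε : |τ| ≤ ε / 2 := le_of_lt (lt_of_lt_of_le hτδ (min_le_left _ _))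
  have hτh : |τ| < 2⁻¹ := lt_of_lt_of_le hτδ (min_le_right _ _)
  have hτ1 : (2:ℝ)⁻¹ ≤ τ + 1 := by
    rcases abs_lt.1 hτh with ⟨h1, h2⟩; linarith
  have hτ1' : τ + 1 ≠ 0 := by
    intro h; rw [h] at hτ1; norm_num at hτ1
  -- replace rpow by exp
  have hFeq : (∫ x, p x * ((p x / q x) ^ τ - 1) ∂μ)
      = ∫ x, p x * (Real.exp (τ * Real.log (p x / q x)) - 1) ∂μ := by
    refine integral_congr_ae ?_
    filter_upwards [hac] with x hx
    rcases eq_or_lt_of_le (hp0 x) with hp | hp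
    · rw [← hp]; ring
    · have hq : 0 < q x := by
        rcases eq_or_lt_of_le (hq0 x) with h | h
        · exact absurd (hx h.symm) (ne_of_gt hp)
        · exact h
      have hpq : 0 < p x / q x := div_pos hp hq
      rw [Real.rpow_def_of_pos hpq, mul_comm (Real.log (p x / q x)) τ]
  have hE := aux_main μ p (fun x => Real.log (p x / q x)) hpm hDm hp0 hpi ε hε hg τ hτε
  rw [← hK] at hE
  have hSS : (∫ x, p x * Real.log (p x / q x) ^ 2 ∂μ) = V + K ^ 2 := by
    rw [hV]; ring
  rw [hSS] at hE
  set A : ℝ := ∫ x, p x * (Real.exp (τ * Real.log (p x / q x)) - 1) ∂μ with hAdef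
  set E : ℝ := A - (τ * K + τ ^ 2 * ((V + K ^ 2) / 2)) with hEdef
  have hid2 : (1 / (τ * (τ + 1))) * A - K - τ * L = (E - L * τ ^ 3) / (τ * (τ + 1)) := by
    have hA : A = τ * K + τ ^ 2 * ((V + K ^ 2) / 2) + E := by rw [hEdef]; ring
    rw [hA, hLdef]
    field_simp
    ring
  have hnum : |E - L * τ ^ 3| ≤ (24 * (2 / ε) ^ 3 * M + |L|) * |τ| ^ 3 := by
    calc |E - L * τ ^ 3| ≤ |E| + |L * τ ^ 3| := abs_sub _ _
      _ ≤ 24 * (2 / ε) ^ 3 * M * |τ| ^ 3 + |L| * |τ| ^ 3 := by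
          refine add_le_add hE ?_
          rw [abs_mul, abs_pow]
      _ = (24 * (2 / ε) ^ 3 * M + |L|) * |τ| ^ 3 := by ring
  have hτpos : 0 < |τ| := abs_pos.2 hτ0'
  have hden : |τ| * 2⁻¹ ≤ |τ * (τ + 1)| := by
    rw [abs_mul]
    refine mul_le_mul_of_nonneg_left ?_ (abs_nonneg τ)
    rw [abs_of_pos (by linarith : (0:ℝ) < τ + 1)]
    exact hτ1
  have hbound : ‖(1 / (τ * (τ + 1))) * (∫ x, p x * ((p x / q x) ^ τ - 1) ∂μ)
      - K - τ * L‖ ≤ 2 * (24 * (2 / ε) ^ 3 * M + |L|) * ‖τ ^ 2‖ := by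
    rw [hFeq, hid2, Real.norm_eq_abs, Real.norm_eq_abs, abs_div]
    calc |E - L * τ ^ 3| / |τ * (τ + 1)|
        ≤ ((24 * (2 / ε) ^ 3 * M + |L|) * |τ| ^ 3) / (|τ| * 2⁻¹) :=
          div_le_div₀ (by positivity) hnum (by positivity) hden
      _ = 2 * (24 * (2 / ε) ^ 3 * M + |L|) * |τ| ^ 2 := by
          field_simp
      _ = 2 * (24 * (2 / ε) ^ 3 * M + |L|) * |τ ^ 2| := by
          rw [abs_pow]
  exact hbound
end

section
/- Assume P ≪ Q, Q ≪ P, and ∫ q(x) e^{ε|Δ(x)|} dμ(x) < ∞ for some ε > 0, and write K = KL(Q‖P) and V = Var_Q[Δ] = ∫ q Δ² dμ − (∫ q Δ dμ)². Then, as τ → 0 from the right, SRFE_τ(P‖Q) = K + τ(K − V/2) + O(τ²); that is, the function τ ↦ SRFE_τ(P‖Q) − K − τ(K − V/2) is O(τ²) as τ ↓ 0. -/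
open MeasureTheory Real Filter Topology Asymptotics

private lemma mvt_bound0 {f f' : ℝ → ℝ} {C s : ℝ}
    (hf : ∀ t, HasDerivAt f (f' t) t)
    (hb : ∀ t ∈ Set.uIcc 0 s, |f' t| ≤ C) :
    |f s - f 0| ≤ C * |s| := by
  have := Convex.norm_image_sub_le_of_norm_hasDerivWithin_le
    (f := f) (f' := f') (s := Set.uIcc 0 s) (C := C)
    (fun t _ => (hf t).hasDerivWithinAt) (fun t ht => hb t ht)
    (convex_uIcc 0 s) Set.left_mem_uIcc Set.right_mem_uIcc
  simpa [Real.norm_eq_abs] using this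

private lemma abs_mem_uIcc0 {s t : ℝ} (ht : t ∈ Set.uIcc 0 s) : |t| ≤ |s| := by
  rw [Set.uIcc_eq_union, Set.mem_union] at ht
  rw [abs_le]
  rcases ht with h | h <;>
    constructor <;> nlinarith [le_abs_self s, neg_abs_le s, h.1, h.2]

private lemma exp_taylor1 (s : ℝ) : |Real.exp s - 1 - s| ≤ s ^ 2 * Real.exp |s| := by
  have h1 : ∀ t : ℝ, |Real.exp t - 1| ≤ |t| * Real.exp |t| := by
    intro t
    have := mvt_bound0 (f := Real.exp) (f' := Real.exp) (C := Real.exp |t|) (s := t)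
      (fun u => Real.hasDerivAt_exp u)
      (fun u hu => by
        rw [abs_of_pos (Real.exp_pos u)]
        exact Real.exp_le_exp.2 ((le_abs_self u).trans (abs_mem_uIcc0 hu)))
    simpa [mul_comm] using this
  have h2 := mvt_bound0 (f := fun t => Real.exp t - 1 - t)
      (f' := fun t => Real.exp t - 1) (C := |s| * Real.exp |s|) (s := s)
      (fun u => ((Real.hasDerivAt_exp u).sub_const 1).sub (hasDerivAt_id u))
      (fun u hu => by
        refine (h1 u).trans ?_
        have h3 := abs_mem_uIcc0 hu
        have h4 : Real.exp |u| ≤ Real.exp |s| := Real.exp_le_exp.2 h3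
        nlinarith [Real.exp_pos |u|, abs_nonneg u])
  have hs : |s| * Real.exp |s| * |s| = s ^ 2 * Real.exp |s| := by
    rw [show |s| * Real.exp |s| * |s| = |s| * |s| * Real.exp |s| from by ring,
      abs_mul_abs_self]; ring
  simpa [hs] using h2

private lemma exp_taylor2 (s : ℝ) :
    |Real.exp s - 1 - s - s ^ 2 / 2| ≤ |s| ^ 3 * Real.exp |s| := by
  have hderiv : ∀ u : ℝ, HasDerivAt (fun t => Real.exp t - 1 - t - t ^ 2 / 2)
      (Real.exp u - 1 - u) u := by
    intro u
    have h := (((Real.hasDerivAt_exp u).sub_const 1).sub (hasDerivAt_id u)).sub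
      ((hasDerivAt_pow 2 u).div_const 2)
    refine HasDerivAt.congr_deriv h ?_
    push_cast; ring
  have h2 := mvt_bound0 (f := fun t => Real.exp t - 1 - t - t ^ 2 / 2)
      (f' := fun t => Real.exp t - 1 - t) (C := s ^ 2 * Real.exp |s|) (s := s)
      hderiv
      (fun u hu => by
        refine (exp_taylor1 u).trans ?_
        have h3 := abs_mem_uIcc0 hu
        have h4 : Real.exp |u| ≤ Real.exp |s| := Real.exp_le_exp.2 h3
        have h5 : u ^ 2 ≤ s ^ 2 := by
          have := mul_self_le_mul_self (abs_nonneg u) h3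
          nlinarith [sq_abs u, sq_abs s]
        nlinarith [Real.exp_pos |u|, sq_nonneg u])
  have hs : s ^ 2 * Real.exp |s| * |s| = |s| ^ 3 * Real.exp |s| := by
    rw [← sq_abs s]; ring
  simpa [hs] using h2

private lemma log_taylor2 {u : ℝ} (hu : |u| ≤ 1/2) :
    |Real.log (1 + u) - u + u ^ 2 / 2| ≤ 2 * |u| ^ 3 := by
  have h1 : |(-u)| < 1 := by rw [abs_neg]; linarith [abs_nonneg u]
  have h2 := Real.abs_log_sub_add_sum_range_le h1 2
  have h3 : (∑ i ∈ Finset.range 2, (-u) ^ (i + 1) / (i + 1)) = -u + u ^ 2 / 2 := by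
    simp [Finset.sum_range_succ]
    ring
  rw [h3, abs_neg] at h2
  have h4 : 1 - (-u) = 1 + u := by ring
  rw [h4] at h2
  have h5 : |u| ^ 3 / (1 - |u|) ≤ 2 * |u| ^ 3 := by
    rw [div_le_iff₀ (by linarith)]
    nlinarith [pow_nonneg (abs_nonneg u) 3]
  have h6 : |Real.log (1 + u) - u + u ^ 2 / 2| = |(-u + u ^ 2 / 2) + Real.log (1 + u)| := by
    ring_nf
  rw [h6]
  exact h2.trans h5

private lemma pt_abs_le {ε : ℝ} (hε : 0 < ε) (t : ℝ) :
    |t| ≤ Real.exp (ε * |t|) / ε := by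
  rw [le_div_iff₀ hε]
  have h := Real.add_one_le_exp (ε * |t|)
  nlinarith [abs_nonneg t]

private lemma pt_sq_le {ε : ℝ} (hε : 0 < ε) (t : ℝ) :
    t ^ 2 ≤ 4 / ε ^ 2 * Real.exp (ε * |t|) := by
  have hE : Real.exp (ε * |t| / 2) * Real.exp (ε * |t| / 2) = Real.exp (ε * |t|) := by
    rw [← Real.exp_add]; ring_nf
  have h := Real.add_one_le_exp (ε * |t| / 2)
  have h2 : ε * |t| / 2 ≤ Real.exp (ε * |t| / 2) := by linarith
  have h3 := mul_self_le_mul_self (by positivity) h2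
  have h4 : |t| * |t| = t ^ 2 := by rw [abs_mul_abs_self]; ring
  rw [div_mul_eq_mul_div, le_div_iff₀ (by positivity)]
  nlinarith

private lemma pt_cube_le {ε : ℝ} (hε : 0 < ε) (t : ℝ) :
    |t| ^ 3 * Real.exp (ε / 2 * |t|) ≤ 216 / ε ^ 3 * Real.exp (ε * |t|) := by
  have h := Real.add_one_le_exp (ε * |t| / 6)
  have h2 : ε * |t| / 6 ≤ Real.exp (ε * |t| / 6) := by linarith
  have h3 : (ε * |t| / 6) ^ 3 ≤ Real.exp (ε * |t| / 6) ^ 3 :=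
    pow_le_pow_left₀ (by positivity) h2 3
  have hE : Real.exp (ε * |t| / 6) ^ 3 = Real.exp (ε / 2 * |t|) := by
    rw [← Real.exp_nat_mul]; ring_nf
  rw [hE] at h3
  have h5 : |t| ^ 3 ≤ 216 / ε ^ 3 * Real.exp (ε / 2 * |t|) := by
    rw [div_mul_eq_mul_div, le_div_iff₀ (by positivity)]
    nlinarith [Real.exp_pos (ε / 2 * |t|), pow_pos hε 3]
  have hEE : Real.exp (ε / 2 * |t|) * Real.exp (ε / 2 * |t|) = Real.exp (ε * |t|) := by
    rw [← Real.exp_add]; ring_nf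
  calc |t| ^ 3 * Real.exp (ε / 2 * |t|)
      ≤ 216 / ε ^ 3 * Real.exp (ε / 2 * |t|) * Real.exp (ε / 2 * |t|) := by
        apply mul_le_mul_of_nonneg_right h5 (Real.exp_pos _).le
    _ = 216 / ε ^ 3 * Real.exp (ε * |t|) := by rw [mul_assoc, hEE]

private lemma integrand_bound {ε τ : ℝ} (hε : 0 < ε) (hτ0 : 0 ≤ τ) (hτ : τ ≤ ε / 2) (t : ℝ) :
    |Real.exp (τ * t) - 1 - τ * t - (τ * t) ^ 2 / 2| ≤
      τ ^ 3 * (216 / ε ^ 3) * Real.exp (ε * |t|) := by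
  have h1 := exp_taylor2 (τ * t)
  have h2 : |τ * t| = τ * |t| := by rw [abs_mul, abs_of_nonneg hτ0]
  have h3 : Real.exp (τ * |t|) ≤ Real.exp (ε / 2 * |t|) :=
    Real.exp_le_exp.2 (mul_le_mul_of_nonneg_right hτ (abs_nonneg t))
  have h4 : |τ * t| ^ 3 * Real.exp |τ * t| ≤ τ ^ 3 * (|t| ^ 3 * Real.exp (ε / 2 * |t|)) := by
    rw [h2, mul_pow]
    calc τ ^ 3 * |t| ^ 3 * Real.exp (τ * |t|) ≤ τ ^ 3 * |t| ^ 3 * Real.exp (ε / 2 * |t|) := by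
          apply mul_le_mul_of_nonneg_left h3 (by positivity)
      _ = τ ^ 3 * (|t| ^ 3 * Real.exp (ε / 2 * |t|)) := by ring
  have h5 := mul_le_mul_of_nonneg_left (pt_cube_le hε t) (show (0:ℝ) ≤ τ ^ 3 by positivity)
  calc |Real.exp (τ * t) - 1 - τ * t - (τ * t) ^ 2 / 2| ≤ |τ * t| ^ 3 * Real.exp |τ * t| := h1
    _ ≤ τ ^ 3 * (|t| ^ 3 * Real.exp (ε / 2 * |t|)) := h4
    _ ≤ τ ^ 3 * (216 / ε ^ 3 * Real.exp (ε * |t|)) := h5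
    _ = τ ^ 3 * (216 / ε ^ 3) * Real.exp (ε * |t|) := by ring

/-- Assume mutual absolute continuity (at the level of densities) and
`∫ q e^{ε|Δ|} dμ < ∞` for some `ε > 0`, where `Δ = log(p/q)`. With `K = KL(Q‖P)` and
`V = Var_Q[Δ] = ∫ q Δ² dμ - (∫ q Δ dμ)²`, the Surprisal–Rényi Free Energy
`SRFE_τ(P‖Q) = -log(∫ p^τ q^(1-τ) dμ)/(τ(1-τ))` satisfies
`SRFE_τ(P‖Q) = K + τ(K - V/2) + O(τ²)` as `τ → 0⁺` within `(0,1)`. -/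
theorem srfe_local_expansion_reverseKL
    {X : Type*} [MeasurableSpace X] (μ : Measure X) [SigmaFinite μ]
    (p q : X → ℝ) (hpm : Measurable p) (hqm : Measurable q)
    (hp0 : ∀ x, 0 ≤ p x) (hq0 : ∀ x, 0 ≤ q x)
    (hpi : Integrable p μ) (hqi : Integrable q μ)
    (hp1 : ∫ x, p x ∂μ = 1) (hq1 : ∫ x, q x ∂μ = 1)
    (hPQ : ∀ᵐ x ∂μ, q x = 0 → p x = 0)
    (hQP : ∀ᵐ x ∂μ, p x = 0 → q x = 0)
    (hexp : ∃ ε > (0 : ℝ),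
      Integrable (fun x => q x * Real.exp (ε * |Real.log (p x / q x)|)) μ)
    (K V : ℝ)
    (hK : K = ∫ x, q x * Real.log (q x / p x) ∂μ)
    (hV : V = (∫ x, q x * (Real.log (p x / q x)) ^ 2 ∂μ) -
      (∫ x, q x * Real.log (p x / q x) ∂μ) ^ 2) :
    (fun τ : ℝ =>
        -Real.log (∫ x, p x ^ τ * q x ^ (1 - τ) ∂μ) / (τ * (1 - τ))
          - K - τ * (K - V / 2))
      =O[𝓝[Set.Ioo (0 : ℝ) 1] 0] (fun τ : ℝ => τ ^ 2) := by
  obtain ⟨ε, hε, hD⟩ := hexp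
  set l := 𝓝[Set.Ioo (0 : ℝ) 1] (0 : ℝ) with hldef
  set m1 := ∫ x, q x * Real.log (p x / q x) ∂μ with hm1def
  set m2 := ∫ x, q x * (Real.log (p x / q x)) ^ 2 ∂μ with hm2def
  set φ : ℝ → ℝ := fun τ => ∫ x, q x * Real.exp (τ * Real.log (p x / q x)) ∂μ with hφdef
  set M := 216 / ε ^ 3 * ∫ x, q x * Real.exp (ε * |Real.log (p x / q x)|) ∂μ with hMdef
  have hΔm : Measurable fun x => Real.log (p x / q x) := (hpm.div hqm).log
  -- integrability facts
  have hint1 : Integrable (fun x => q x * Real.log (p x / q x)) μ := by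
    apply (hD.div_const ε).mono' ((hqm.mul hΔm).aestronglyMeasurable)
    filter_upwards with x
    simp only [Pi.mul_apply]
    rw [Real.norm_eq_abs, abs_mul, abs_of_nonneg (hq0 x)]
    calc q x * |Real.log (p x / q x)|
        ≤ q x * (Real.exp (ε * |Real.log (p x / q x)|) / ε) :=
          mul_le_mul_of_nonneg_left (pt_abs_le hε _) (hq0 x)
      _ = q x * Real.exp (ε * |Real.log (p x / q x)|) / ε := by ring
  have hint2 : Integrable (fun x => q x * (Real.log (p x / q x)) ^ 2) μ := by
    apply (hD.const_mul (4 / ε ^ 2)).mono' ((hqm.mul (hΔm.pow_const 2)).aestronglyMeasurable)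
    filter_upwards with x
    simp only [Pi.mul_apply]
    rw [Real.norm_eq_abs, abs_mul, abs_of_nonneg (hq0 x), abs_of_nonneg (sq_nonneg _)]
    calc q x * (Real.log (p x / q x)) ^ 2
        ≤ q x * (4 / ε ^ 2 * Real.exp (ε * |Real.log (p x / q x)|)) :=
          mul_le_mul_of_nonneg_left (pt_sq_le hε _) (hq0 x)
      _ = 4 / ε ^ 2 * (q x * Real.exp (ε * |Real.log (p x / q x)|)) := by ring
  have hint3 : ∀ τ : ℝ, 0 ≤ τ → τ ≤ ε →
      Integrable (fun x => q x * Real.exp (τ * Real.log (p x / q x))) μ := by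
    intro τ h0 h1
    apply hD.mono' ((hqm.mul ((measurable_const.mul hΔm).exp)).aestronglyMeasurable)
    filter_upwards with x
    simp only [Pi.mul_apply]
    rw [Real.norm_eq_abs, abs_mul, abs_of_nonneg (hq0 x), abs_of_nonneg (Real.exp_pos _).le]
    apply mul_le_mul_of_nonneg_left _ (hq0 x)
    apply Real.exp_le_exp.2
    calc τ * Real.log (p x / q x) ≤ τ * |Real.log (p x / q x)| :=
          mul_le_mul_of_nonneg_left (le_abs_self _) h0
      _ ≤ ε * |Real.log (p x / q x)| := mul_le_mul_of_nonneg_right h1 (abs_nonneg _)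
  -- quantitative second-order expansion of φ
  have h_r : ∀ τ : ℝ, 0 ≤ τ → τ ≤ ε / 2 →
      |φ τ - (1 + τ * m1 + τ ^ 2 * (m2 / 2))| ≤ M * τ ^ 3 := by
    intro τ h0 h1
    have hτε : τ ≤ ε := by linarith
    have hI := hint3 τ h0 hτε
    have i1 : Integrable (fun x => q x * Real.exp (τ * Real.log (p x / q x)) - q x) μ :=
      hI.sub hqi
    have i2 : Integrable (fun x => q x * Real.exp (τ * Real.log (p x / q x)) - q x
        - τ * (q x * Real.log (p x / q x))) μ := i1.sub (hint1.const_mul τ)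
    have e1 : ∫ x, (q x * Real.exp (τ * Real.log (p x / q x)) - q x
          - τ * (q x * Real.log (p x / q x))
          - τ ^ 2 / 2 * (q x * (Real.log (p x / q x)) ^ 2)) ∂μ
        = φ τ - (1 + τ * m1 + τ ^ 2 * (m2 / 2)) := by
      rw [integral_sub i2 (hint2.const_mul (τ ^ 2 / 2)),
        integral_sub i1 (hint1.const_mul τ), integral_sub hI hqi,
        integral_const_mul, integral_const_mul, hq1]
      simp only [hφdef, hm1def, hm2def]
      ring
    rw [← e1]
    have hInt : Integrable (fun x => q x * Real.exp (τ * Real.log (p x / q x)) - q x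
        - τ * (q x * Real.log (p x / q x))
        - τ ^ 2 / 2 * (q x * (Real.log (p x / q x)) ^ 2)) μ :=
      i2.sub (hint2.const_mul (τ ^ 2 / 2))
    calc |∫ x, (q x * Real.exp (τ * Real.log (p x / q x)) - q x
          - τ * (q x * Real.log (p x / q x))
          - τ ^ 2 / 2 * (q x * (Real.log (p x / q x)) ^ 2)) ∂μ|
        ≤ ∫ x, |q x * Real.exp (τ * Real.log (p x / q x)) - q x
          - τ * (q x * Real.log (p x / q x))
          - τ ^ 2 / 2 * (q x * (Real.log (p x / q x)) ^ 2)| ∂μ := by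
          exact norm_integral_le_integral_norm (μ := μ)
            (f := fun x => q x * Real.exp (τ * Real.log (p x / q x)) - q x
              - τ * (q x * Real.log (p x / q x))
              - τ ^ 2 / 2 * (q x * (Real.log (p x / q x)) ^ 2))
      _ ≤ ∫ x, τ ^ 3 * (216 / ε ^ 3) *
            (q x * Real.exp (ε * |Real.log (p x / q x)|)) ∂μ := by
          apply integral_mono hInt.abs (hD.const_mul _)
          intro x
          dsimp only
          have heq : q x * Real.exp (τ * Real.log (p x / q x)) - q x
              - τ * (q x * Real.log (p x / q x))
              - τ ^ 2 / 2 * (q x * (Real.log (p x / q x)) ^ 2)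
            = q x * (Real.exp (τ * Real.log (p x / q x)) - 1 - τ * Real.log (p x / q x)
              - (τ * Real.log (p x / q x)) ^ 2 / 2) := by ring
          rw [heq, abs_mul, abs_of_nonneg (hq0 x)]
          calc q x * |Real.exp (τ * Real.log (p x / q x)) - 1 - τ * Real.log (p x / q x)
              - (τ * Real.log (p x / q x)) ^ 2 / 2|
              ≤ q x * (τ ^ 3 * (216 / ε ^ 3) * Real.exp (ε * |Real.log (p x / q x)|)) :=
                mul_le_mul_of_nonneg_left (integrand_bound hε h0 h1 _) (hq0 x)
            _ = τ ^ 3 * (216 / ε ^ 3) * (q x * Real.exp (ε * |Real.log (p x / q x)|)) := by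
                ring
      _ = M * τ ^ 3 := by rw [integral_const_mul, hMdef]; ring
  -- identity between the Chernoff integral and φ on (0,1)
  have hFφ : ∀ τ : ℝ, τ ∈ Set.Ioo (0:ℝ) 1 →
      (∫ x, p x ^ τ * q x ^ (1 - τ) ∂μ) = φ τ := by
    intro τ hτ
    simp only [hφdef]
    apply integral_congr_ae
    filter_upwards [hPQ, hQP] with x h1 h2
    by_cases hqx : q x = 0
    · have hpx : p x = 0 := h1 hqx
      rw [hqx, hpx, Real.zero_rpow hτ.1.ne', zero_mul, zero_mul]
    · have hq' : 0 < q x := (hq0 x).lt_of_ne (Ne.symm hqx)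
      have hp' : 0 < p x := by
        rcases (hp0 x).eq_or_lt with h | h
        · exact absurd (h2 h.symm) hqx
        · exact h
      have hqe : ∀ A : ℝ, q x * Real.exp A = Real.exp (Real.log (q x) + A) := fun A => by
        rw [Real.exp_add, Real.exp_log hq']
      rw [Real.rpow_def_of_pos hp', Real.rpow_def_of_pos hq', ← Real.exp_add,
        Real.log_div hp'.ne' hq'.ne', hqe]
      congr 1
      ring
  -- m1 = -K
  have hm1K : m1 = -K := by
    rw [hK, hm1def, ← integral_neg]
    apply integral_congr_ae
    filter_upwards with x
    rw [show q x / p x = (p x / q x)⁻¹ from (inv_div _ _).symm, Real.log_inv]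
    ring
  have hVm : V = m2 - m1 ^ 2 := hV
  -- filter facts
  have hmem : ∀ᶠ τ in l, τ ∈ Set.Ioo (0:ℝ) 1 := eventually_mem_nhdsWithin
  have hlt : ∀ {δ : ℝ}, 0 < δ → ∀ᶠ τ in l, τ < δ := fun hδ =>
    (eventually_lt_nhds hδ).filter_mono nhdsWithin_le_nhds
  -- big-O facts
  have hO_r : (fun τ => φ τ - (1 + τ * m1 + τ ^ 2 * (m2 / 2))) =O[l] (fun τ => τ ^ 3) := by
    rw [isBigO_iff]
    refine ⟨M, ?_⟩
    filter_upwards [hmem, hlt (half_pos hε)] with τ h1 h2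
    rw [Real.norm_eq_abs, Real.norm_eq_abs, abs_of_pos (pow_pos h1.1 3)]
    exact h_r τ h1.1.le h2.le
  have hOpow : ∀ a b : ℕ, b ≤ a → (fun τ : ℝ => τ ^ a) =O[l] (fun τ : ℝ => τ ^ b) := by
    intro a b hab
    rw [isBigO_iff]
    refine ⟨1, ?_⟩
    filter_upwards [hmem] with τ h1
    rw [Real.norm_eq_abs, Real.norm_eq_abs, one_mul, abs_of_pos (pow_pos h1.1 _),
      abs_of_pos (pow_pos h1.1 _)]
    exact pow_le_pow_of_le_one h1.1.le h1.2.le hab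
  have hOc : ∀ (c : ℝ) (n : ℕ), (fun τ : ℝ => c * τ ^ n) =O[l] (fun τ : ℝ => τ ^ n) :=
    fun c n => (isBigO_refl _ _).const_mul_left c
  have hOu : (fun τ => φ τ - 1) =O[l] (fun τ : ℝ => τ ^ 1) := by
    have heq : (fun τ : ℝ => φ τ - 1)
        = fun τ => (φ τ - (1 + τ * m1 + τ ^ 2 * (m2 / 2)))
          + (m1 * τ ^ 1 + m2 / 2 * τ ^ 2) := by funext τ; ring
    rw [heq]
    exact (hO_r.trans (hOpow 3 1 (by norm_num))).add
      ((hOc m1 1).add ((hOc (m2 / 2) 2).trans (hOpow 2 1 (by norm_num))))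
  have htend : Tendsto (fun τ => φ τ - 1) l (𝓝 0) := by
    have h1 : Tendsto (fun τ : ℝ => τ ^ 1) l (𝓝 0) := by
      have := ((continuous_pow 1).tendsto (0 : ℝ)).mono_left
        (nhdsWithin_le_nhds (s := Set.Ioo (0:ℝ) 1))
      simpa [hldef] using this
    exact hOu.trans_tendsto h1
  have hhalf : ∀ᶠ τ in l, |φ τ - 1| ≤ 1 / 2 := by
    have h := Metric.tendsto_nhds.mp htend (1 / 2) (by norm_num)
    filter_upwards [h] with τ hτ
    rw [Real.dist_eq, sub_zero] at hτ
    linarith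
  obtain ⟨c1, hc1pos, hc1⟩ := hOu.exists_pos
  have hc1b := hc1.bound
  have hOlog : (fun τ => Real.log (φ τ) - ((φ τ - 1) - (φ τ - 1) ^ 2 / 2))
      =O[l] (fun τ : ℝ => τ ^ 3) := by
    rw [isBigO_iff]
    refine ⟨2 * c1 ^ 3, ?_⟩
    filter_upwards [hhalf, hc1b] with τ h1 h2
    have h3 := log_taylor2 h1
    have h4 : (1 : ℝ) + (φ τ - 1) = φ τ := by ring
    rw [h4] at h3
    have h5 : |φ τ - 1| ≤ c1 * |τ| := by simpa [Real.norm_eq_abs] using h2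
    have h6 : |φ τ - 1| ^ 3 ≤ (c1 * |τ|) ^ 3 := pow_le_pow_left₀ (abs_nonneg _) h5 3
    have h7 : |τ ^ 3| = |τ| ^ 3 := abs_pow τ 3
    have h8 : Real.log (φ τ) - ((φ τ - 1) - (φ τ - 1) ^ 2 / 2)
        = Real.log (φ τ) - (φ τ - 1) + (φ τ - 1) ^ 2 / 2 := by ring
    rw [Real.norm_eq_abs, Real.norm_eq_abs, h8, h7]
    calc |Real.log (φ τ) - (φ τ - 1) + (φ τ - 1) ^ 2 / 2| ≤ 2 * |φ τ - 1| ^ 3 := h3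
      _ ≤ 2 * (c1 * |τ|) ^ 3 := by linarith
      _ = 2 * c1 ^ 3 * |τ| ^ 3 := by ring
  have hA : (fun τ => (φ τ - 1) - m1 * τ) =O[l] (fun τ : ℝ => τ ^ 2) := by
    have heq : (fun τ : ℝ => (φ τ - 1) - m1 * τ)
        = fun τ => (φ τ - (1 + τ * m1 + τ ^ 2 * (m2 / 2))) + m2 / 2 * τ ^ 2 := by
      funext τ; ring
    rw [heq]
    exact (hO_r.trans (hOpow 3 2 (by norm_num))).add (hOc (m2 / 2) 2)
  have hB : (fun τ => (φ τ - 1) + m1 * τ) =O[l] (fun τ : ℝ => τ ^ 1) := by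
    have heq : (fun τ : ℝ => (φ τ - 1) + m1 * τ)
        = fun τ => (φ τ - 1) + m1 * τ ^ 1 := by funext τ; ring
    rw [heq]
    exact hOu.add (hOc m1 1)
  have hO_u2 : (fun τ => (φ τ - 1) ^ 2 - m1 ^ 2 * τ ^ 2) =O[l] (fun τ : ℝ => τ ^ 3) := by
    have h := hA.mul hB
    exact (h.congr (fun τ => by ring) (fun τ => by ring))
  have hOL : (fun τ => Real.log (φ τ) - (m1 * τ + (m2 - m1 ^ 2) / 2 * τ ^ 2))
      =O[l] (fun τ : ℝ => τ ^ 3) := by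
    have h := (hOlog.add hO_r).sub (hO_u2.const_mul_left (1 / 2))
    exact h.congr (fun τ => by ring) (fun τ => by ring)
  have hmain : (fun τ => -Real.log (φ τ) - (τ * (1 - τ)) * (K + τ * (K - V / 2)))
      =O[l] (fun τ : ℝ => τ ^ 3) := by
    have h := hOL.neg_left.add (hOc (K - V / 2) 3)
    refine h.congr (fun τ => ?_) (fun τ => by ring)
    rw [hVm, hm1K]
    ring
  -- conclude
  obtain ⟨c, hcpos, hc⟩ := hmain.exists_pos
  rw [isBigO_iff]
  refine ⟨2 * c, ?_⟩
  filter_upwards [hmem, hlt (show (0:ℝ) < 1/2 by norm_num), hc.bound] with τ h1 h2 h3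
  rw [hFφ τ h1]
  have hd : 0 < τ * (1 - τ) := mul_pos h1.1 (by linarith [h1.2])
  have heq : -Real.log (φ τ) / (τ * (1 - τ)) - K - τ * (K - V / 2)
      = (-Real.log (φ τ) - (τ * (1 - τ)) * (K + τ * (K - V / 2))) / (τ * (1 - τ)) := by
    rw [eq_div_iff hd.ne', sub_mul, sub_mul, div_mul_cancel₀ _ hd.ne']
    ring
  rw [heq, Real.norm_eq_abs, Real.norm_eq_abs, abs_div, abs_of_pos hd, div_le_iff₀ hd]
  have h3' : |(-Real.log (φ τ) - (τ * (1 - τ)) * (K + τ * (K - V / 2)))| ≤ c * τ ^ 3 := by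
    have := h3
    rw [Real.norm_eq_abs, Real.norm_eq_abs, abs_of_pos (pow_pos h1.1 3)] at this
    exact this
  have hnn : 0 ≤ c * τ ^ 3 * (1 - 2 * τ) :=
    mul_nonneg (mul_nonneg hcpos.le (pow_pos h1.1 3).le) (by linarith)
  have habs2 : |τ ^ 2| = τ ^ 2 := abs_of_pos (pow_pos h1.1 2)
  rw [habs2]
  nlinarith [h3', hnn]
end

section
/- Fix τ ∈ (0,1) with 0 < F(τ) < ∞ and let R be any probability measure with μ-density r such that R ≪ P and R ≪ Q and both ∫ r log(r/p) dμ and ∫ r log(r/q) dμ are finite. Then (1/τ)·KL(R‖Q) + (1/(1−τ))·KL(R‖P) ≥ SRFE_τ(P‖Q), with equality if and only if r = r_τ μ-almost everywhere, where r_τ(x) = p(x)^τ q(x)^{1−τ}/F(τ) is the escort (Chernoff) density. In particular, SRFE_τ(P‖Q) is the minimum over probability measures R of (1/τ)KL(R‖Q) + (1/(1−τ))KL(R‖P), with unique minimizer the escort distribution. -/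
open MeasureTheory Real Filter Topology

lemma key_ineq (a b : ℝ) (ha : 0 ≤ a) (hb : 0 ≤ b) (hab : a ≠ 0 → 0 < b) :
    0 ≤ a * Real.log (a / b) - (a - b) ∧
      (a * Real.log (a / b) - (a - b) = 0 ↔ a = b) := by
  rcases eq_or_lt_of_le ha with h0 | hpos
  · simp [← h0, eq_comm, le_of_lt, hb]
  · have hb' : 0 < b := hab hpos.ne'
    set t := a / b with ht
    have htpos : 0 < t := div_pos hpos hb'
    have hat : a = b * t := by rw [ht, mul_div_assoc']; exact (mul_div_cancel_left₀ a hb'.ne').symm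
    have hexp : -Real.log t + 1 ≤ 1 / t := by
      have := Real.add_one_le_exp (-Real.log t)
      rwa [Real.exp_neg, Real.exp_log htpos, ← one_div] at this
    have h1 : t * (-Real.log t + 1) ≤ 1 := by
      have := mul_le_mul_of_nonneg_left hexp htpos.le
      rwa [mul_one_div, div_self htpos.ne'] at this
    constructor
    · rw [hat]; nlinarith [hb'.le]
    · constructor
      · intro h
        by_cases hteq : t = 1
        · rw [hat, hteq, mul_one]
        · exfalso
          have hlt : -Real.log t + 1 < 1 / t := by
            have := Real.add_one_lt_exp (x := -Real.log t) (by
              simp only [ne_eq, neg_eq_zero, Real.log_eq_zero]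
              push_neg
              exact ⟨htpos.ne', hteq, by nlinarith⟩)
            rwa [Real.exp_neg, Real.exp_log htpos, ← one_div] at this
          have h2 : t * (-Real.log t + 1) < 1 := by
            have := mul_lt_mul_of_pos_left hlt htpos
            rwa [mul_one_div, div_self htpos.ne'] at this
          rw [hat] at h; nlinarith
      · intro h
        have : t = 1 := by rw [ht, h, div_self hb'.ne']
        rw [hat, this, mul_one]; simp

/-- Fix `τ ∈ (0,1)` with `0 < F(τ) < ∞` (positivity and integrability of
`p^τ q^(1-τ)`). For any probability density `r` with `R ≪ P`, `R ≪ Q` and finite relative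
entropies `∫ r log(r/p) dμ`, `∫ r log(r/q) dμ`, one has
`(1/τ)·KL(R‖Q) + (1/(1-τ))·KL(R‖P) ≥ SRFE_τ(P‖Q)`, with equality iff `r = r_τ` μ-a.e.,
where `r_τ = p^τ q^(1-τ)/F(τ)` is the escort (Chernoff) density. In particular SRFE is the
minimum of the weighted KL sum, uniquely attained at the escort distribution. -/
theorem srfe_variational_characterization
    {X : Type*} [MeasurableSpace X] (μ : Measure X) [SigmaFinite μ]
    (p q r : X → ℝ) (hpm : Measurable p) (hqm : Measurable q) (hrm : Measurable r)
    (hp0 : ∀ x, 0 ≤ p x) (hq0 : ∀ x, 0 ≤ q x) (hr0 : ∀ x, 0 ≤ r x)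
    (hp1 : ∫ x, p x ∂μ = 1) (hq1 : ∫ x, q x ∂μ = 1) (hr1 : ∫ x, r x ∂μ = 1)
    (τ : ℝ) (hτ : τ ∈ Set.Ioo (0 : ℝ) 1)
    (hF : 0 < ∫ x, p x ^ τ * q x ^ (1 - τ) ∂μ)
    (hFi : Integrable (fun x => p x ^ τ * q x ^ (1 - τ)) μ)
    (hRP : ∀ᵐ x ∂μ, p x = 0 → r x = 0)
    (hRQ : ∀ᵐ x ∂μ, q x = 0 → r x = 0)
    (hiP : Integrable (fun x => r x * Real.log (r x / p x)) μ)
    (hiQ : Integrable (fun x => r x * Real.log (r x / q x)) μ) :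
    (-Real.log (∫ x, p x ^ τ * q x ^ (1 - τ) ∂μ) / (τ * (1 - τ)) ≤
        (1 / τ) * (∫ x, r x * Real.log (r x / q x) ∂μ) +
          (1 / (1 - τ)) * (∫ x, r x * Real.log (r x / p x) ∂μ)) ∧
      ((1 / τ) * (∫ x, r x * Real.log (r x / q x) ∂μ) +
          (1 / (1 - τ)) * (∫ x, r x * Real.log (r x / p x) ∂μ) =
        -Real.log (∫ x, p x ^ τ * q x ^ (1 - τ) ∂μ) / (τ * (1 - τ)) ↔
        r =ᵐ[μ] fun x =>
          p x ^ τ * q x ^ (1 - τ) / (∫ y, p y ^ τ * q y ^ (1 - τ) ∂μ)) := by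
  obtain ⟨hτ0, hτ1⟩ := hτ
  have hτ1' : 0 < 1 - τ := by linarith
  set F := ∫ x, p x ^ τ * q x ^ (1 - τ) ∂μ with hFdef
  have hri : Integrable r μ := by
    by_contra h
    rw [integral_undef h] at hr1; norm_num at hr1
  set A := ∫ x, r x * Real.log (r x / q x) ∂μ with hA
  set B := ∫ x, r x * Real.log (r x / p x) ∂μ with hB
  set s : X → ℝ := fun x => p x ^ τ * q x ^ (1 - τ) with hs
  have hs0 : ∀ x, 0 ≤ s x := fun x =>
    mul_nonneg (Real.rpow_nonneg (hp0 x) _) (Real.rpow_nonneg (hq0 x) _)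
  set rt : X → ℝ := fun x => s x / F with hrtdef
  have hrti : Integrable rt μ := hFi.div_const F
  have hrt1 : ∫ x, rt x ∂μ = 1 := by
    simp only [hrtdef]
    rw [integral_div]
    exact div_self hF.ne'
  have hae := hRP.and hRQ
  set k : X → ℝ := fun x => r x * Real.log (r x / rt x) with hk
  have hkey : ∀ᵐ x ∂μ, k x = (1 - τ) * (r x * Real.log (r x / q x))
      + τ * (r x * Real.log (r x / p x)) + Real.log F * r x := by
    filter_upwards [hae] with x hx
    obtain ⟨hxp, hxq⟩ := hx
    rcases eq_or_lt_of_le (hr0 x) with h0 | hrx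
    · simp [hk, ← h0]
    · have hrne : r x ≠ 0 := hrx.ne'
      have hpx : 0 < p x := (hp0 x).lt_of_ne (fun h => hrne (hxp h.symm))
      have hqx : 0 < q x := (hq0 x).lt_of_ne (fun h => hrne (hxq h.symm))
      have hsx : 0 < s x := mul_pos (Real.rpow_pos_of_pos hpx _) (Real.rpow_pos_of_pos hqx _)
      have hrtx : 0 < rt x := div_pos hsx hF
      have e1 : Real.log (r x / rt x) = Real.log (r x) - Real.log (rt x) :=
        Real.log_div hrne hrtx.ne'
      have e2 : Real.log (rt x) = Real.log (s x) - Real.log F := Real.log_div hsx.ne' hF.ne'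
      have e3 : Real.log (s x) = τ * Real.log (p x) + (1 - τ) * Real.log (q x) := by
        simp only [hs]
        rw [Real.log_mul (Real.rpow_pos_of_pos hpx _).ne' (Real.rpow_pos_of_pos hqx _).ne',
          Real.log_rpow hpx, Real.log_rpow hqx]
      have e4 : Real.log (r x / q x) = Real.log (r x) - Real.log (q x) :=
        Real.log_div hrne hqx.ne'
      have e5 : Real.log (r x / p x) = Real.log (r x) - Real.log (p x) :=
        Real.log_div hrne hpx.ne'
      simp only [hk]
      rw [e1, e2, e3, e4, e5]
      ring
  have hbig : Integrable (fun x => (1 - τ) * (r x * Real.log (r x / q x))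
      + τ * (r x * Real.log (r x / p x)) + Real.log F * r x) μ :=
    ((hiQ.const_mul (1 - τ)).add (hiP.const_mul τ)).add (hri.const_mul (Real.log F))
  have hkeyEq : k =ᶠ[MeasureTheory.ae μ] (fun x => (1 - τ) * (r x * Real.log (r x / q x))
      + τ * (r x * Real.log (r x / p x)) + Real.log F * r x) := hkey
  have hki : Integrable k μ := hbig.congr hkeyEq.symm
  have hkint : ∫ x, k x ∂μ = (1 - τ) * A + τ * B + Real.log F := by
    have hI1 : Integrable (fun x => (1 - τ) * (r x * Real.log (r x / q x))
        + τ * (r x * Real.log (r x / p x))) μ := (hiQ.const_mul _).add (hiP.const_mul _)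
    rw [integral_congr_ae hkeyEq,
      integral_add hI1 (hri.const_mul (Real.log F)),
      integral_add (hiQ.const_mul (1 - τ)) (hiP.const_mul τ),
      integral_const_mul, integral_const_mul, integral_const_mul, hr1]
    ring
  set φ : X → ℝ := fun x => k x - (r x - rt x) with hφ
  have hφi : Integrable φ μ := hki.sub (show Integrable (fun x => r x - rt x) μ from hri.sub hrti)
  have hφint : ∫ x, φ x ∂μ = ∫ x, k x ∂μ := by
    simp only [hφ]
    have hri2 : Integrable (fun x => r x - rt x) μ := hri.sub hrti
    rw [integral_sub hki hri2, integral_sub hri hrti, hr1, hrt1]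
    ring
  have hφkey : ∀ᵐ x ∂μ, 0 ≤ φ x ∧ (φ x = 0 ↔ r x = rt x) := by
    filter_upwards [hae] with x hx
    obtain ⟨hxp, hxq⟩ := hx
    have hb : r x ≠ 0 → 0 < rt x := by
      intro h
      have hpx : 0 < p x := (hp0 x).lt_of_ne (fun e => h (hxp e.symm))
      have hqx : 0 < q x := (hq0 x).lt_of_ne (fun e => h (hxq e.symm))
      exact div_pos (mul_pos (Real.rpow_pos_of_pos hpx _) (Real.rpow_pos_of_pos hqx _)) hF
    exact key_ineq (r x) (rt x) (hr0 x) (div_nonneg (hs0 x) hF.le) hb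
  have hφnn : 0 ≤ᵐ[μ] φ := hφkey.mono fun x h => h.1
  have hknn : 0 ≤ ∫ x, k x ∂μ := hφint ▸ integral_nonneg_of_ae hφnn
  have hzero : (∫ x, k x ∂μ = 0) ↔ r =ᵐ[μ] rt := by
    rw [← hφint, integral_eq_zero_iff_of_nonneg_ae hφnn hφi]
    constructor
    · intro h; filter_upwards [h, hφkey] with x h1 h2; exact h2.2.mp h1
    · intro h; filter_upwards [h, hφkey] with x h1 h2; exact h2.2.mpr h1
  have hT : 0 < τ * (1 - τ) := mul_pos hτ0 hτ1'
  have hID : (1 / τ) * A + (1 / (1 - τ)) * B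
      = ((∫ x, k x ∂μ) - Real.log F) / (τ * (1 - τ)) := by
    rw [hkint]
    field_simp
    ring
  constructor
  · rw [hID, div_le_div_iff_of_pos_right hT]  -- might be div_le_div_right
    linarith [hknn]
  · rw [hID]
    constructor
    · intro h
      have h2 : (∫ x, k x ∂μ) - Real.log F = -Real.log F := by
        have := congrArg (· * (τ * (1 - τ))) h
        simpa [div_mul_cancel₀, hT.ne'] using this
      exact hzero.mp (by linarith)
    · intro h
      rw [hzero.mpr h, zero_sub]
end
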